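/- arXiv:1707.04539 — 10 statements merged into one kernel-verified Lean document; each statement's English description precedes it below -/
import Mathlib

section
/- Let H = (V, A ∪ B) be a cross-intersecting family in which every edge has size at least 3 and no edge contains another (Sperner condition). Then the chromatic number of H is at most 3. -/
open Finset

private lemma ssub_of {V : Type*} [DecidableEq V] {e a : Finset V} {v : V}
    (hsub : e ⊆ a) (hva : v ∈ a) (hve : v ∉ e) : e ⊂ a :=
  Finset.ssubset_def.mpr ⟨hsub, fun h => hve (h hva)⟩

private lemma two_le_inter {V : Type*} [DecidableEq V] {e b : Finset V} {y : V}
    (he3 : 3 ≤ e.card) (hsub : ∀ w ∈ e, w ≠ y → w ∈ b) : 2 ≤ (e ∩ b).card := by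
  have hsub' : e.erase y ⊆ e ∩ b := by
    intro w hw
    rw [Finset.mem_erase] at hw
    exact Finset.mem_inter.mpr ⟨hw.2, hsub w hw.2 hw.1⟩
  have h1 := Finset.card_le_card hsub'
  have h2 : e.card - 1 ≤ (e.erase y).card := Finset.pred_card_le_card_erase
  omega

private lemma build {V : Type*} [DecidableEq V]
    (A B : Finset (Finset V)) (P Q : Finset V)
    (hP : ∀ e ∈ A ∪ B, ¬ e ⊆ P)
    (hQ : ∀ e ∈ A ∪ B, ¬ e ⊆ Q)
    (hR : ∀ e ∈ A ∪ B, ∃ v ∈ e, v ∈ P ∨ v ∈ Q) :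
    ∃ c : V → Fin 3, ∀ e ∈ A ∪ B, ∃ x ∈ e, ∃ y ∈ e, c x ≠ c y := by
  classical
  refine ⟨fun v => if v ∈ P then 0 else if v ∈ Q then 1 else 2, ?_⟩
  intro e he
  by_contra h
  push_neg at h
  obtain ⟨v, hv, hvPQ⟩ := hR e he
  by_cases hvP : v ∈ P
  · refine hP e he fun w hw => ?_
    have hcw := h w hw v hv
    rw [if_pos hvP] at hcw
    by_contra hwP
    rw [if_neg hwP] at hcw
    split_ifs at hcw <;> exact absurd hcw (by decide)
  · have hvQ : v ∈ Q := hvPQ.resolve_left hvP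
    refine hQ e he fun w hw => ?_
    have hcw := h w hw v hv
    rw [if_neg hvP, if_pos hvQ] at hcw
    by_cases hwP : w ∈ P
    · rw [if_pos hwP] at hcw; exact absurd hcw (by decide)
    · rw [if_neg hwP] at hcw
      by_contra hwQ
      rw [if_neg hwQ] at hcw
      exact absurd hcw (by decide)

/-- A Sperner cross-intersecting family all of whose edges have size at
least 3 has chromatic number at most 3. -/
theorem stmt1 {V : Type*} [DecidableEq V]
    (A B : Finset (Finset V))
    (hA : A.Nonempty) (hB : B.Nonempty)
    (hcross : ∀ a ∈ A, ∀ b ∈ B, (a ∩ b).Nonempty)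
    (hsize : ∀ e ∈ A ∪ B, 3 ≤ e.card)
    (hsperner : ∀ e₁ ∈ A ∪ B, ∀ e₂ ∈ A ∪ B, ¬ e₁ ⊂ e₂) :
    ∃ c : V → Fin 3, ∀ e ∈ A ∪ B, ∃ x ∈ e, ∃ y ∈ e, c x ≠ c y := by
  classical
  by_cases hcase : ∃ a ∈ A, ∃ b ∈ B, 2 ≤ (a ∩ b).card
  -- CASE 1: some pair intersects in ≥ 2 points
  · obtain ⟨a, haA, b, hbB, hab⟩ := hcase
    obtain ⟨x, hx, y, hy, hyx⟩ := Finset.one_lt_card.mp hab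
    rw [Finset.mem_inter] at hx hy
    apply build A B (a \ {x}) ((b \ a) ∪ {x})
    · -- no edge inside a \ {x}
      intro e he hsub
      refine hsperner e he a (Finset.mem_union_left _ haA) (ssub_of ?_ hx.1 ?_)
      · intro w hw; exact (Finset.mem_sdiff.mp (hsub hw)).1
      · intro hxe
        exact (Finset.mem_sdiff.mp (hsub hxe)).2 (Finset.mem_singleton_self x)
    · -- no edge inside (b \ a) ∪ {x}
      intro e he hsub
      refine hsperner e he b (Finset.mem_union_right _ hbB) (ssub_of ?_ hy.2 ?_)
      · intro w hw
        rcases Finset.mem_union.mp (hsub hw) with h' | h'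
        · exact (Finset.mem_sdiff.mp h').1
        · rw [Finset.mem_singleton.mp h']; exact hx.2
      · intro hye
        rcases Finset.mem_union.mp (hsub hye) with h' | h'
        · exact (Finset.mem_sdiff.mp h').2 hy.1
        · exact hyx (Finset.mem_singleton.mp h').symm
    · -- every edge meets the two classes
      intro e he
      have key : ∀ v, v ∈ a ∪ b → v ∈ a \ {x} ∨ v ∈ (b \ a) ∪ {x} := by
        intro v hv
        by_cases hvx : v = x
        · right; exact Finset.mem_union_right _ (by simp [hvx])
        · by_cases hva : v ∈ a
          · left; exact Finset.mem_sdiff.mpr ⟨hva, by simp [hvx]⟩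
          · right
            rcases Finset.mem_union.mp hv with h' | h'
            · exact absurd h' hva
            · exact Finset.mem_union_left _ (Finset.mem_sdiff.mpr ⟨h', hva⟩)
      rcases Finset.mem_union.mp he with heA | heB
      · obtain ⟨v, hv⟩ := hcross e heA b hbB
        rw [Finset.mem_inter] at hv
        exact ⟨v, hv.1, key v (Finset.mem_union_right _ hv.2)⟩
      · obtain ⟨v, hv⟩ := hcross a haA e heB
        rw [Finset.mem_inter] at hv
        exact ⟨v, hv.2, key v (Finset.mem_union_left _ hv.1)⟩
  -- CASE 2: all cross-intersections are singletons
  · push_neg at hcase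
    have hone : ∀ a ∈ A, ∀ b ∈ B, (a ∩ b).card = 1 := by
      intro a ha b hb
      have h1 := Finset.card_pos.mpr (hcross a ha b hb)
      have h2 := hcase a ha b hb
      omega
    obtain ⟨a₀, ha₀⟩ := hA
    obtain ⟨b₀, hb₀⟩ := hB
    obtain ⟨x, hx⟩ := Finset.card_eq_one.mp (hone a₀ ha₀ b₀ hb₀)
    have hxa : x ∈ a₀ := (Finset.mem_inter.mp (hx ▸ Finset.mem_singleton_self x)).1
    have hxb : x ∈ b₀ := (Finset.mem_inter.mp (hx ▸ Finset.mem_singleton_self x)).2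
    have ha₀u : a₀ ∈ A ∪ B := Finset.mem_union_left _ ha₀
    have hb₀u : b₀ ∈ A ∪ B := Finset.mem_union_right _ hb₀
    -- helper: x is the unique common point
    have huniq : ∀ v, v ∈ a₀ → v ∈ b₀ → v = x := by
      intro v hva hvb
      have : v ∈ a₀ ∩ b₀ := Finset.mem_inter.mpr ⟨hva, hvb⟩
      rw [hx, Finset.mem_singleton] at this; exact this
    by_cases h1 : ∃ y ∈ a₀ \ {x}, ∀ e ∈ B, ¬ e ⊆ (b₀ \ {x}) ∪ {y}
    · -- attempt 1 works
      obtain ⟨y, hy, hgood⟩ := h1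
      rw [Finset.mem_sdiff, Finset.mem_singleton] at hy
      apply build A B (a₀ \ {y}) ((b₀ \ {x}) ∪ {y})
      · intro e he hsub
        refine hsperner e he a₀ ha₀u (ssub_of ?_ hy.1 ?_)
        · intro w hw; exact (Finset.mem_sdiff.mp (hsub hw)).1
        · intro hye; exact (Finset.mem_sdiff.mp (hsub hye)).2 (Finset.mem_singleton_self y)
      · intro e he hsub
        rcases Finset.mem_union.mp he with heA | heB
        · -- A-edge inside Q would meet b₀ in ≥ 2 points
          have h2le : 2 ≤ (e ∩ b₀).card := by
            refine two_le_inter (y := y) (hsize e he) ?_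
            intro w hw hwy
            rcases Finset.mem_union.mp (hsub hw) with h' | h'
            · exact (Finset.mem_sdiff.mp h').1
            · exact absurd (Finset.mem_singleton.mp h') hwy
          rw [hone e heA b₀ hb₀] at h2le; omega
        · exact hgood e heB hsub
      · intro e he
        have key : ∀ v, v ∈ a₀ ∪ b₀ → v ∈ a₀ \ {y} ∨ v ∈ (b₀ \ {x}) ∪ {y} := by
          intro v hv
          by_cases hvy : v = y
          · right; exact Finset.mem_union_right _ (by simp [hvy])
          · by_cases hvx : v = x
            · left; exact Finset.mem_sdiff.mpr ⟨hvx ▸ hxa, by simp [hvy]⟩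
            · rcases Finset.mem_union.mp hv with h' | h'
              · left; exact Finset.mem_sdiff.mpr ⟨h', by simp [hvy]⟩
              · right; exact Finset.mem_union_left _ (Finset.mem_sdiff.mpr ⟨h', by simp [hvx]⟩)
        rcases Finset.mem_union.mp he with heA | heB
        · obtain ⟨v, hv⟩ := hcross e heA b₀ hb₀
          rw [Finset.mem_inter] at hv
          exact ⟨v, hv.1, key v (Finset.mem_union_right _ hv.2)⟩
        · obtain ⟨v, hv⟩ := hcross a₀ ha₀ e heB
          rw [Finset.mem_inter] at hv
          exact ⟨v, hv.2, key v (Finset.mem_union_left _ hv.1)⟩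
    · push_neg at h1
      by_cases h2 : ∃ y ∈ a₀ \ {x}, ∃ ey ∈ B, ey ⊆ (b₀ \ {x}) ∪ {y} ∧
          ∀ e ∈ B, ¬ e ⊆ (ey \ {y}) ∪ {x}
      · -- attempt 2 works
        obtain ⟨y, hy, ey, heyB, heysub, hgood⟩ := h2
        rw [Finset.mem_sdiff, Finset.mem_singleton] at hy
        have heyu : ey ∈ A ∪ B := Finset.mem_union_right _ heyB
        have hQb : (ey \ {y}) ∪ {x} ⊆ b₀ := by
          intro w hw
          rcases Finset.mem_union.mp hw with h' | h'
          · rw [Finset.mem_sdiff, Finset.mem_singleton] at h'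
            rcases Finset.mem_union.mp (heysub h'.1) with h'' | h''
            · exact (Finset.mem_sdiff.mp h'').1
            · exact absurd (Finset.mem_singleton.mp h'') h'.2
          · rw [Finset.mem_singleton.mp h']; exact hxb
        apply build A B (a₀ \ {x}) ((ey \ {y}) ∪ {x})
        · intro e he hsub
          refine hsperner e he a₀ ha₀u (ssub_of ?_ hxa ?_)
          · intro w hw; exact (Finset.mem_sdiff.mp (hsub hw)).1
          · intro hxe; exact (Finset.mem_sdiff.mp (hsub hxe)).2 (Finset.mem_singleton_self x)
        · intro e he hsub
          rcases Finset.mem_union.mp he with heA | heB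
          · -- A-edge inside Q ⊆ b₀ : meets b₀ in ≥ 3 points
            have hesub : e ⊆ b₀ := hsub.trans hQb
            have : e ∩ b₀ = e := Finset.inter_eq_left.mpr hesub
            have h3 := hsize e he
            rw [← this, hone e heA b₀ hb₀] at h3; omega
          · exact hgood e heB hsub
        · intro e he
          rcases Finset.mem_union.mp he with heA | heB
          · obtain ⟨v, hv⟩ := hcross e heA ey heyB
            rw [Finset.mem_inter] at hv
            refine ⟨v, hv.1, ?_⟩
            by_cases hvy : v = y
            · left; exact Finset.mem_sdiff.mpr ⟨hvy ▸ hy.1, by simp [hvy, hy.2]⟩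
            · right; exact Finset.mem_union_left _ (Finset.mem_sdiff.mpr ⟨hv.2, by simp [hvy]⟩)
          · obtain ⟨v, hv⟩ := hcross a₀ ha₀ e heB
            rw [Finset.mem_inter] at hv
            refine ⟨v, hv.2, ?_⟩
            by_cases hvx : v = x
            · right; exact Finset.mem_union_right _ (by simp [hvx])
            · left; exact Finset.mem_sdiff.mpr ⟨hv.1, by simp [hvx]⟩
      · push_neg at h2
        -- structure: for every y ∈ a₀ \ {x}, (b₀ \ {x}) ∪ {y} ∈ B
        have hstruct : ∀ y ∈ a₀ \ {x}, (b₀ \ {x}) ∪ {y} ∈ B := by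
          intro y hy
          obtain ⟨ey, heyB, heysub⟩ := h1 y hy
          rw [Finset.mem_sdiff, Finset.mem_singleton] at hy
          obtain ⟨e, heB, hesub⟩ := h2 y (by simp [hy.1, hy.2]) ey heyB heysub
          have heyu : ey ∈ A ∪ B := Finset.mem_union_right _ heyB
          -- e ⊆ b₀ so e = b₀ by Sperner
          have heb : e ⊆ b₀ := by
            intro w hw
            rcases Finset.mem_union.mp (hesub hw) with h' | h'
            · rw [Finset.mem_sdiff, Finset.mem_singleton] at h'
              rcases Finset.mem_union.mp (heysub h'.1) with h'' | h''
              · exact (Finset.mem_sdiff.mp h'').1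
              · exact absurd (Finset.mem_singleton.mp h'') h'.2
            · rw [Finset.mem_singleton.mp h']; exact hxb
          have heq : e = b₀ := by
            by_contra hne
            exact hsperner e (Finset.mem_union_right _ heB) b₀ hb₀u ⟨heb, fun h => hne (Finset.Subset.antisymm heb h)⟩
          -- y ∈ ey
          have hyey : y ∈ ey := by
            by_contra hyey
            refine hsperner ey heyu b₀ hb₀u (ssub_of ?_ hxb ?_)
            · intro w hw
              rcases Finset.mem_union.mp (heysub hw) with h' | h'
              · exact (Finset.mem_sdiff.mp h').1
              · exact absurd h' (by simp; rintro rfl; exact hyey hw)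
            · intro hxey
              rcases Finset.mem_union.mp (heysub hxey) with h' | h'
              · exact (Finset.mem_sdiff.mp h').2 (Finset.mem_singleton_self x)
              · exact hy.2 (Finset.mem_singleton.mp h').symm
          -- b₀ \ {x} ⊆ ey
          have hb₀ey : b₀ \ {x} ⊆ ey := by
            intro w hw
            rw [Finset.mem_sdiff, Finset.mem_singleton] at hw
            have hwb : w ∈ e := heq ▸ hw.1
            rcases Finset.mem_union.mp (hesub hwb) with h' | h'
            · exact (Finset.mem_sdiff.mp h').1
            · exact absurd (Finset.mem_singleton.mp h') hw.2
          have : ey = (b₀ \ {x}) ∪ {y} := by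
            apply Finset.Subset.antisymm heysub
            intro w hw
            rcases Finset.mem_union.mp hw with h' | h'
            · exact hb₀ey h'
            · rw [Finset.mem_singleton.mp h']; exact hyey
          exact this ▸ heyB
        by_cases h3 : ∃ z ∈ b₀ \ {x}, ∀ e ∈ A, ¬ e ⊆ (a₀ \ {x}) ∪ {z}
        · -- attempt 3 works
          obtain ⟨z, hz, hgood⟩ := h3
          rw [Finset.mem_sdiff, Finset.mem_singleton] at hz
          apply build A B ((a₀ \ {x}) ∪ {z}) (b₀ \ {z})
          · intro e he hsub
            rcases Finset.mem_union.mp he with heA | heB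
            · exact hgood e heA hsub
            · -- B-edge inside P would meet a₀ in ≥ 2 points
              have h2le : 2 ≤ (e ∩ a₀).card := by
                refine two_le_inter (y := z) (hsize e he) ?_
                intro w hw hwz
                rcases Finset.mem_union.mp (hsub hw) with h' | h'
                · exact (Finset.mem_sdiff.mp h').1
                · exact absurd (Finset.mem_singleton.mp h') hwz
              rw [Finset.inter_comm, hone a₀ ha₀ e heB] at h2le; omega
          · intro e he hsub
            refine hsperner e he b₀ hb₀u (ssub_of ?_ hz.1 ?_)
            · intro w hw; exact (Finset.mem_sdiff.mp (hsub hw)).1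
            · intro hze; exact (Finset.mem_sdiff.mp (hsub hze)).2 (Finset.mem_singleton_self z)
          · intro e he
            have key : ∀ v, v ∈ a₀ ∪ b₀ → v ∈ (a₀ \ {x}) ∪ {z} ∨ v ∈ b₀ \ {z} := by
              intro v hv
              by_cases hvz : v = z
              · left; exact Finset.mem_union_right _ (by simp [hvz])
              · by_cases hvx : v = x
                · right; exact Finset.mem_sdiff.mpr ⟨hvx ▸ hxb, by simp [hvz]⟩
                · rcases Finset.mem_union.mp hv with h' | h'
                  · left; exact Finset.mem_union_left _ (Finset.mem_sdiff.mpr ⟨h', by simp [hvx]⟩)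
                  · right; exact Finset.mem_sdiff.mpr ⟨h', by simp [hvz]⟩
            rcases Finset.mem_union.mp he with heA | heB
            · obtain ⟨v, hv⟩ := hcross e heA b₀ hb₀
              rw [Finset.mem_inter] at hv
              exact ⟨v, hv.1, key v (Finset.mem_union_right _ hv.2)⟩
            · obtain ⟨v, hv⟩ := hcross a₀ ha₀ e heB
              rw [Finset.mem_inter] at hv
              exact ⟨v, hv.2, key v (Finset.mem_union_left _ hv.1)⟩
        · -- final contradiction
          exfalso
          push_neg at h3
          -- pick z ∈ b₀ \ {x}
          have hb₀3 := hsize b₀ hb₀u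
          have hcardbx : 1 ≤ (b₀ \ {x}).card := by
            have : (b₀ \ {x}).card = b₀.card - 1 := by
              rw [Finset.sdiff_singleton_eq_erase, Finset.card_erase_of_mem hxb]
            omega
          obtain ⟨z, hz⟩ := Finset.card_pos.mp (show 0 < (b₀ \ {x}).card by omega)
          obtain ⟨f, hfA, hfsub⟩ := h3 z hz
          rw [Finset.mem_sdiff, Finset.mem_singleton] at hz
          have hfu : f ∈ A ∪ B := Finset.mem_union_left _ hfA
          have hzf : z ∈ f := by
            by_contra hzf
            refine hsperner f hfu a₀ ha₀u (ssub_of ?_ hxa ?_)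
            · intro w hw
              rcases Finset.mem_union.mp (hfsub hw) with h' | h'
              · exact (Finset.mem_sdiff.mp h').1
              · exact absurd h' (by simp; rintro rfl; exact hzf hw)
            · intro hxf
              rcases Finset.mem_union.mp (hfsub hxf) with h' | h'
              · exact (Finset.mem_sdiff.mp h').2 (Finset.mem_singleton_self x)
              · exact hz.2 (Finset.mem_singleton.mp h').symm
          -- pick y ∈ f, y ≠ z
          have hf3 := hsize f hfu
          have hcardfz : 1 ≤ (f.erase z).card := by
            rw [Finset.card_erase_of_mem hzf]; omega
          obtain ⟨y, hy⟩ := Finset.card_pos.mp (show 0 < (f.erase z).card by omega)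
          rw [Finset.mem_erase] at hy
          have hyax : y ∈ a₀ \ {x} := by
            rcases Finset.mem_union.mp (hfsub hy.2) with h' | h'
            · exact h'
            · exact absurd (Finset.mem_singleton.mp h') hy.1
          have hg := hstruct y hyax
          have hcard := hone f hfA _ hg
          have hsub2 : ({z, y} : Finset V) ⊆ f ∩ ((b₀ \ {x}) ∪ {y}) := by
            intro w hw
            rw [Finset.mem_insert, Finset.mem_singleton] at hw
            rcases hw with rfl | rfl
            · exact Finset.mem_inter.mpr ⟨hzf, Finset.mem_union_left _ (by simp [hz.1, hz.2])⟩
            · exact Finset.mem_inter.mpr ⟨hy.2, Finset.mem_union_right _ (by simp)⟩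
          have hyz : y ≠ z := hy.1
          have h2le : 2 ≤ (f ∩ ((b₀ \ {x}) ∪ {y})).card := by
            have := Finset.card_le_card hsub2
            rw [Finset.card_insert_of_notMem (by simp [hyz.symm]), Finset.card_singleton] at this
            omega
          omega
end

section
/- Let H = (V, A ∪ B) be an n-uniform cross-intersecting family with n ≥ 3. Then χ(H) ≤ 3. -/
/-!
Fix `a ∈ A` and `b ∈ B`; every edge meets `U = a ∪ b`. Colour a set `P ⊆ U` with `0`, the rest
of `U` with `1` and everything outside `U` with `2`: an edge leaving `U` sees `2` and a colour
of `U`, so it suffices that no edge inside `U` lies in `P` or in `U \ P`.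
If some `a, b` share at least two points, then `|U| ≤ 2n - 2` and any `P` with `|P| = n - 1`
does this by counting. Otherwise all cross intersections are single points; then an `A`-edge
inside `U` must contain all of `a \ b`, a `B`-edge all of `b \ a`, and `P = {z, y}` with
`z ∈ a \ b`, `y ∈ b \ a` works because edges have at least three points.
-/

namespace Finset

variable {V : Type*} [DecidableEq V]

theorem exists_fin_three_coloring_of_split (E : Finset (Finset V)) (U P : Finset V)
    (hPU : P ⊆ U) (hmeet : ∀ e ∈ E, (e ∩ U).Nonempty)
    (hsplit : ∀ e ∈ E, e ⊆ U → ¬e ⊆ P ∧ ¬e ⊆ U \ P) :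
    ∃ c : V → Fin 3, ∀ e ∈ E, ∃ x ∈ e, ∃ y ∈ e, c x ≠ c y := by
  refine ⟨fun v => if v ∈ P then 0 else if v ∈ U then 1 else 2, fun e he => ?_⟩
  by_cases heU : e ⊆ U
  · obtain ⟨hP, hUP⟩ := hsplit e he heU
    obtain ⟨x, hxe, hxP⟩ := not_subset.mp hP
    obtain ⟨y, hye, hyUP⟩ := not_subset.mp hUP
    have hyP : y ∈ P := by simpa [heU hye] using hyUP
    exact ⟨x, hxe, y, hye, by simp [hxP, hyP, heU hxe]⟩
  · obtain ⟨x, hx⟩ := hmeet e he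
    obtain ⟨y, hye, hyU⟩ := not_subset.mp heU
    have hyP : y ∉ P := fun h => hyU (hPU h)
    refine ⟨x, (mem_inter.mp hx).1, y, hye, ?_⟩
    by_cases hxP : x ∈ P <;> simp [hxP, (mem_inter.mp hx).2, hyP, hyU]

theorem exists_split_of_card_add_two_le (U : Finset V) (n : ℕ) (hU : #U + 2 ≤ 2 * n) :
    ∃ P ⊆ U, ∀ e ⊆ U, #e = n → ¬e ⊆ P ∧ ¬e ⊆ U \ P := by
  obtain ⟨P, hPU, hP⟩ := exists_subset_card_eq (min_le_right (n - 1) #U)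
  refine ⟨P, hPU, fun e _ he => ⟨fun heP => ?_, fun heUP => ?_⟩⟩
  · have hcard := card_le_card heP
    omega
  · have hcard := card_le_card heUP
    rw [card_sdiff_of_subset hPU] at hcard
    omega

theorem sdiff_subset_of_subset_union {a b e : Finset V} (he : e ⊆ a ∪ b) (hcard : #e = #a)
    (hinter : #(e ∩ b) ≤ #(a ∩ b)) : a \ b ⊆ e := by
  have hsub : e \ b ⊆ a \ b := fun v hv => by
    rw [mem_sdiff] at hv ⊢
    exact ⟨(mem_union.mp (he hv.1)).resolve_right hv.2, hv.2⟩
  have heq : e \ b = a \ b := by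
    refine eq_of_subset_of_card_le hsub ?_
    have he' := card_inter_add_card_sdiff e b
    have ha' := card_inter_add_card_sdiff a b
    omega
  exact heq ▸ sdiff_subset

theorem exists_split_of_card_inter_lt_two {A B : Finset (Finset V)} {n : ℕ} (hn : 3 ≤ n)
    (hcross : ∀ a ∈ A, ∀ b ∈ B, (a ∩ b).Nonempty) (hunif : ∀ e ∈ A ∪ B, #e = n)
    (hsmall : ∀ a ∈ A, ∀ b ∈ B, #(a ∩ b) < 2) {a b : Finset V} (ha : a ∈ A) (hb : b ∈ B) :
    ∃ P ⊆ a ∪ b, ∀ e ∈ A ∪ B, e ⊆ a ∪ b → ¬e ⊆ P ∧ ¬e ⊆ (a ∪ b) \ P := by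
  have hca := hunif a (mem_union_left _ ha)
  have hcb := hunif b (mem_union_right _ hb)
  have hab := hsmall a ha b hb
  obtain ⟨z, hz⟩ : (a \ b).Nonempty := by
    rw [nonempty_iff_ne_empty, Ne, sdiff_eq_empty_iff_subset]
    intro h
    rw [inter_eq_left.mpr h] at hab
    omega
  obtain ⟨y, hy⟩ : (b \ a).Nonempty := by
    rw [nonempty_iff_ne_empty, Ne, sdiff_eq_empty_iff_subset]
    intro h
    rw [inter_eq_right.mpr h] at hab
    omega
  have hPU : {z, y} ⊆ a ∪ b :=
    insert_subset (mem_union_left _ (mem_sdiff.mp hz).1)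
      (singleton_subset_iff.mpr (mem_union_right _ (mem_sdiff.mp hy).1))
  refine ⟨{z, y}, hPU, fun e he heU => ⟨fun heP => ?_, fun heUP => ?_⟩⟩
  · have hcard := card_le_card heP
    have hP2 := card_le_two (a := z) (b := y)
    have hce := hunif e he
    omega
  · have hce := hunif e he
    have hab0 := card_pos.mpr (hcross a ha b hb)
    have hzy : z ∈ e ∨ y ∈ e := by
      rcases mem_union.mp he with heA | heB
      · have heb := hsmall e heA b hb
        exact Or.inl (sdiff_subset_of_subset_union heU (by omega) (by omega) hz)
      · have hea : #(e ∩ a) < 2 := inter_comm a e ▸ hsmall a ha e heB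
        rw [inter_comm] at hab0
        exact Or.inr <|
          sdiff_subset_of_subset_union (union_comm a b ▸ heU) (by omega) (by omega) hy
    rcases hzy with h | h
    · exact (mem_sdiff.mp (heUP h)).2 (mem_insert_self z {y})
    · exact (mem_sdiff.mp (heUP h)).2 (mem_insert_of_mem (mem_singleton_self y))

end Finset

open Finset

/-- An `n`-uniform cross-intersecting family with `n ≥ 3` has chromatic
number at most 3. -/
theorem stmt2 {V : Type*} [DecidableEq V]
    (A B : Finset (Finset V)) (n : ℕ) (hn : 3 ≤ n)
    (hA : A.Nonempty) (hB : B.Nonempty)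
    (hcross : ∀ a ∈ A, ∀ b ∈ B, (a ∩ b).Nonempty)
    (hunif : ∀ e ∈ A ∪ B, e.card = n) :
    ∃ c : V → Fin 3, ∀ e ∈ A ∪ B, ∃ x ∈ e, ∃ y ∈ e, c x ≠ c y := by
  have hmeet : ∀ a ∈ A, ∀ b ∈ B, ∀ e ∈ A ∪ B, (e ∩ (a ∪ b)).Nonempty := by
    intro a ha b hb e he
    rcases mem_union.mp he with heA | heB
    · exact (hcross e heA b hb).mono (inter_subset_inter_left subset_union_right)
    · exact (inter_comm a e ▸ hcross a ha e heB).mono (inter_subset_inter_left subset_union_left)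
  by_cases hlarge : ∃ a ∈ A, ∃ b ∈ B, 2 ≤ #(a ∩ b)
  · obtain ⟨a, ha, b, hb, hab⟩ := hlarge
    have hU : #(a ∪ b) + 2 ≤ 2 * n := by
      have hcard := card_union_add_card_inter a b
      rw [hunif a (mem_union_left _ ha), hunif b (mem_union_right _ hb)] at hcard
      omega
    obtain ⟨P, hPU, hP⟩ := exists_split_of_card_add_two_le (a ∪ b) n hU
    exact exists_fin_three_coloring_of_split _ _ P hPU (hmeet a ha b hb)
      fun e he heU => hP e heU (hunif e he)
  · push Not at hlarge
    obtain ⟨a, ha⟩ := hA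
    obtain ⟨b, hb⟩ := hB
    obtain ⟨P, hPU, hP⟩ := exists_split_of_card_inter_lt_two hn hcross hunif hlarge ha hb
    exact exists_fin_three_coloring_of_split _ _ P hPU (hmeet a ha b hb) hP
end

section
/- Let H = (V, A ∪ B) be a 2-uniform cross-intersecting family (a graph) with χ(H) ≥ 4. Then H contains K₄ as a subgraph; in particular if H is connected on its vertex support and χ(H) = 4 then the edge set of H on its support is exactly the edge set of K₄. -/
lemma edge_sub_union {V : Type*} [DecidableEq V] {e X Y : Finset V}
    (he : e.card = 2) (hd : ∀ x, x ∈ X → x ∉ Y)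
    (h1 : (e ∩ X).Nonempty) (h2 : (e ∩ Y).Nonempty) : e ⊆ X ∪ Y := by
  obtain ⟨x, hx⟩ := h1
  obtain ⟨y, hy⟩ := h2
  rw [Finset.mem_inter] at hx hy
  have hxy : x ≠ y := fun h => hd x hx.2 (h ▸ hy.2)
  have hsub : ({x, y} : Finset V) ⊆ e := by
    intro t ht
    rcases Finset.mem_insert.mp ht with h | h
    · exact h ▸ hx.1
    · exact (Finset.mem_singleton.mp h) ▸ hy.1
  have heq : ({x, y} : Finset V) = e :=
    Finset.eq_of_subset_of_card_le hsub (by rw [he, Finset.card_pair hxy])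
  rw [← heq]
  intro t ht
  rcases Finset.mem_insert.mp ht with h | h
  · exact Finset.mem_union_left _ (h ▸ hx.2)
  · exact Finset.mem_union_right _ ((Finset.mem_singleton.mp h) ▸ hy.2)

set_option maxHeartbeats 1000000 in
/-- A 2-uniform cross-intersecting family (a graph) with chromatic number
at least 4 contains `K₄` as a subgraph; moreover, if it is connected on its vertex
support and has chromatic number exactly 4, then its edge set on the support is
exactly the edge set of that `K₄`. -/
theorem stmt3 {V : Type*} [DecidableEq V]
    (A B : Finset (Finset V))
    (hA : A.Nonempty) (hB : B.Nonempty)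
    (hcross : ∀ a ∈ A, ∀ b ∈ B, (a ∩ b).Nonempty)
    (hunif : ∀ e ∈ A ∪ B, e.card = 2)
    (hchrom : ¬ ∃ c : V → Fin 3, ∀ e ∈ A ∪ B, ∃ x ∈ e, ∃ y ∈ e, c x ≠ c y) :
    ∃ w x y z : V, w ≠ x ∧ w ≠ y ∧ w ≠ z ∧ x ≠ y ∧ x ≠ z ∧ y ≠ z ∧
      (∀ p ∈ ({w, x, y, z} : Finset V), ∀ q ∈ ({w, x, y, z} : Finset V),
        p ≠ q → ({p, q} : Finset V) ∈ A ∪ B) ∧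
      ((∀ u v : V, (∃ e ∈ A ∪ B, u ∈ e) → (∃ e ∈ A ∪ B, v ∈ e) →
          Relation.ReflTransGen (fun p q => ∃ e ∈ A ∪ B, p ∈ e ∧ q ∈ e) u v) →
        (∃ c : V → Fin 4, ∀ e ∈ A ∪ B, ∃ x' ∈ e, ∃ y' ∈ e, c x' ≠ c y') →
        ∀ e ∈ A ∪ B, e ⊆ ({w, x, y, z} : Finset V)) := by
  classical
  obtain ⟨a0, ha0⟩ := hA
  obtain ⟨b0, hb0⟩ := hB
  have ha0c : a0.card = 2 := hunif a0 (Finset.mem_union_left _ ha0)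
  have hb0c : b0.card = 2 := hunif b0 (Finset.mem_union_right _ hb0)
  set S := a0 ∪ b0 with hSdef
  -- S is a cover
  have hcover : ∀ e ∈ A ∪ B, (e ∩ S).Nonempty := by
    intro e he
    rcases Finset.mem_union.mp he with h | h
    · obtain ⟨x, hx⟩ := hcross e h b0 hb0
      rw [Finset.mem_inter] at hx
      exact ⟨x, Finset.mem_inter.mpr ⟨hx.1, Finset.mem_union_right _ hx.2⟩⟩
    · obtain ⟨x, hx⟩ := hcross a0 ha0 e h
      rw [Finset.mem_inter] at hx
      exact ⟨x, Finset.mem_inter.mpr ⟨hx.2, Finset.mem_union_left _ hx.1⟩⟩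
  have hScard3 : S.card ≤ 3 := by
    have h1 := Finset.card_union_add_card_inter a0 b0
    rw [← hSdef] at h1
    have h2 : 1 ≤ (a0 ∩ b0).card := Finset.card_pos.mpr (hcross a0 ha0 b0 hb0)
    omega
  have hScard2 : 2 ≤ S.card := le_trans (ha0c ▸ le_refl _) (Finset.card_le_card Finset.subset_union_left)
  -- a generic way to produce the two endpoints of an edge
  have hedge : ∀ e ∈ A ∪ B, ∃ x y : V, x ≠ y ∧ e = {x, y} := by
    intro e he
    exact Finset.card_eq_two.mp (hunif e he)
  -- S has exactly 3 elements
  have hS3 : S.card = 3 := by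
    by_contra h
    have h2 : S.card = 2 := by omega
    obtain ⟨s1, s2, hs12, hSeq⟩ := Finset.card_eq_two.mp h2
    apply hchrom
    refine ⟨fun x => if x = s1 then 0 else if x = s2 then 1 else 2, ?_⟩
    intro e he
    obtain ⟨x, y, hxy, hexy⟩ := hedge e he
    obtain ⟨t, ht⟩ := hcover e he
    rw [Finset.mem_inter, hSeq] at ht
    refine ⟨x, by simp [hexy], y, by simp [hexy], ?_⟩
    have htx : t = x ∨ t = y := by
      have := ht.1; rw [hexy] at this; simpa using this
    have hts : t = s1 ∨ t = s2 := by simpa using ht.2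
    dsimp only
    rcases htx with rfl | rfl <;> split_ifs <;> simp_all
  obtain ⟨s1, s2, s3, h12, h13, h23, hSeq⟩ := Finset.card_eq_three.mp hS3
  -- cover rephrased
  have hcov3 : ∀ e ∈ A ∪ B, s1 ∈ e ∨ s2 ∈ e ∨ s3 ∈ e := by
    intro e he
    obtain ⟨t, ht⟩ := hcover e he
    rw [Finset.mem_inter, hSeq] at ht
    have := ht.2
    simp only [Finset.mem_insert, Finset.mem_singleton] at this
    rcases this with rfl | rfl | rfl
    · exact Or.inl ht.1
    · exact Or.inr (Or.inl ht.1)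
    · exact Or.inr (Or.inr ht.1)
  -- all three pairs of S are edges
  have key : ∀ t1 t2 t3 : V, ({s1, s2, s3} : Finset V) = {t1, t2, t3} →
      ({t1, t2} : Finset V) ∈ A ∪ B := by
    intro t1 t2 t3 hperm
    by_contra hne
    apply hchrom
    refine ⟨fun x => if x = t1 ∨ x = t2 then 0 else if x = t3 then 1 else 2, ?_⟩
    intro e he
    obtain ⟨x, y, hxy, hexy⟩ := hedge e he
    obtain ⟨t, ht⟩ := hcover e he
    rw [Finset.mem_inter, hSeq, hperm] at ht
    have htmem : t = t1 ∨ t = t2 ∨ t = t3 := by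
      have := ht.2
      simp only [Finset.mem_insert, Finset.mem_singleton] at this
      exact this
    have htx : t = x ∨ t = y := by
      have := ht.1; rw [hexy] at this; simpa using this
    rw [hexy] at he
    have hcolor : ∀ u v : V, u ≠ v → ({u, v} : Finset V) ∈ A ∪ B →
        (u = t1 ∨ u = t2 ∨ u = t3) →
        (if u = t1 ∨ u = t2 then (0 : Fin 3) else if u = t3 then 1 else 2) ≠
          (if v = t1 ∨ v = t2 then (0 : Fin 3) else if v = t3 then 1 else 2) := by
      intro u v huv hmem hu
      by_cases h1 : u = t1 ∨ u = t2
      · rw [if_pos h1]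
        by_cases h2 : v = t1 ∨ v = t2
        · exfalso
          rcases h1 with rfl | rfl <;> rcases h2 with rfl | rfl
          · exact huv rfl
          · exact hne hmem
          · exact hne (by rwa [Finset.pair_comm] at hmem)
          · exact huv rfl
        · rw [if_neg h2]; split_ifs <;> decide
      · have h3 : u = t3 :=
          (hu.resolve_left fun h => h1 (Or.inl h)).resolve_left fun h => h1 (Or.inr h)
        rw [if_neg h1, if_pos h3]
        by_cases h2 : v = t1 ∨ v = t2
        · rw [if_pos h2]; decide
        · have h4 : ¬ v = t3 := fun h => huv (h3.trans h.symm)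
          rw [if_neg h2, if_neg h4]; decide
    rcases htx with h | h
    · exact ⟨x, by simp [hexy], y, by simp [hexy], hcolor x y hxy he (h ▸ htmem)⟩
    · exact ⟨y, by simp [hexy], x, by simp [hexy],
        hcolor y x (Ne.symm hxy) (by rwa [Finset.pair_comm] at he) (h ▸ htmem)⟩
  have e12 : ({s1, s2} : Finset V) ∈ A ∪ B := key s1 s2 s3 rfl
  have e13 : ({s1, s3} : Finset V) ∈ A ∪ B := key s1 s3 s2 (by
    ext u; simp only [Finset.mem_insert, Finset.mem_singleton]; tauto)
  have e23 : ({s2, s3} : Finset V) ∈ A ∪ B := key s2 s3 s1 (by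
    ext u; simp only [Finset.mem_insert, Finset.mem_singleton]; tauto)
  -- apex vertex adjacent to all of S
  have hapex : ∃ w : V, w ≠ s1 ∧ w ≠ s2 ∧ w ≠ s3 ∧
      ({w, s1} : Finset V) ∈ A ∪ B ∧ ({w, s2} : Finset V) ∈ A ∪ B ∧
      ({w, s3} : Finset V) ∈ A ∪ B := by
    by_contra hno
    push_neg at hno
    apply hchrom
    obtain ⟨c, hc⟩ : ∃ c : V → Fin 3, c = fun x =>
        if x = s1 then 0 else if x = s2 then 1 else if x = s3 then 2
        else if ({x, s1} : Finset V) ∈ A ∪ B then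
          (if ({x, s2} : Finset V) ∈ A ∪ B then 2 else 1) else 0 := ⟨_, rfl⟩
    refine ⟨c, ?_⟩
    have hcs1 : c s1 = 0 := by simp [hc]
    have hcs2 : c s2 = 1 := by
      rw [hc]; simp [h12.symm]
    have hcs3 : c s3 = 2 := by
      rw [hc]; simp [h13.symm, h23.symm]
    have hout : ∀ v : V, v ≠ s1 → v ≠ s2 → v ≠ s3 →
        (c v = 0 → ({v, s1} : Finset V) ∉ A ∪ B) ∧
        (c v = 1 → ({v, s2} : Finset V) ∉ A ∪ B) ∧
        (c v = 2 → ({v, s3} : Finset V) ∉ A ∪ B) := by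
      intro v hv1 hv2 hv3
      have hcv : c v = if ({v, s1} : Finset V) ∈ A ∪ B then
          (if ({v, s2} : Finset V) ∈ A ∪ B then 2 else 1) else 0 := by
        rw [hc]; simp [hv1, hv2, hv3]
      by_cases hm1 : ({v, s1} : Finset V) ∈ A ∪ B
      · by_cases hm2 : ({v, s2} : Finset V) ∈ A ∪ B
        · rw [hcv, if_pos hm1, if_pos hm2]
          exact ⟨fun h => absurd h (by decide), fun h => absurd h (by decide),
            fun _ => hno v hv1 hv2 hv3 hm1 hm2⟩
        · rw [hcv, if_pos hm1, if_neg hm2]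
          exact ⟨fun h => absurd h (by decide), fun _ => hm2,
            fun h => absurd h (by decide)⟩
      · rw [hcv, if_neg hm1]
        exact ⟨fun _ => hm1, fun h => absurd h (by decide),
          fun h => absurd h (by decide)⟩
    have hgood : ∀ u v : V, u ≠ v → ({u, v} : Finset V) ∈ A ∪ B →
        (u = s1 ∨ u = s2 ∨ u = s3) → c u ≠ c v := by
      intro u v huv hmem hu
      by_cases hv : v = s1 ∨ v = s2 ∨ v = s3
      · rcases hu with rfl | rfl | rfl <;> rcases hv with rfl | rfl | rfl <;>
          first
            | exact absurd rfl huv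
            | (simp only [hcs1, hcs2, hcs3]; decide)
      · have hv1 : v ≠ s1 := fun h => hv (Or.inl h)
        have hv2 : v ≠ s2 := fun h => hv (Or.inr (Or.inl h))
        have hv3 : v ≠ s3 := fun h => hv (Or.inr (Or.inr h))
        obtain ⟨k0, k1, k2⟩ := hout v hv1 hv2 hv3
        rcases hu with rfl | rfl | rfl
        · rw [hcs1]; intro h
          exact k0 h.symm (by rwa [Finset.pair_comm] at hmem)
        · rw [hcs2]; intro h
          exact k1 h.symm (by rwa [Finset.pair_comm] at hmem)
        · rw [hcs3]; intro h
          exact k2 h.symm (by rwa [Finset.pair_comm] at hmem)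
    intro e he
    obtain ⟨x, y, hxy, hexy⟩ := hedge e he
    have hm : (x = s1 ∨ x = s2 ∨ x = s3) ∨ (y = s1 ∨ y = s2 ∨ y = s3) := by
      rcases hcov3 e he with h | h | h <;> rw [hexy] at h <;>
          simp only [Finset.mem_insert, Finset.mem_singleton] at h <;>
          rcases h with h | h
      · exact Or.inl (Or.inl h.symm)
      · exact Or.inr (Or.inl h.symm)
      · exact Or.inl (Or.inr (Or.inl h.symm))
      · exact Or.inr (Or.inr (Or.inl h.symm))
      · exact Or.inl (Or.inr (Or.inr h.symm))
      · exact Or.inr (Or.inr (Or.inr h.symm))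
    rw [hexy] at he
    rcases hm with hm | hm
    · exact ⟨x, by simp [hexy], y, by simp [hexy], hgood x y hxy he hm⟩
    · exact ⟨y, by simp [hexy], x, by simp [hexy],
        hgood y x (Ne.symm hxy) (by rwa [Finset.pair_comm] at he) hm⟩
  obtain ⟨w, hw1, hw2, hw3, ew1, ew2, ew3⟩ := hapex
  have hsymm : ∀ u v : V, ({u, v} : Finset V) ∈ A ∪ B →
      ({v, u} : Finset V) ∈ A ∪ B := fun u v h => by
    rwa [Finset.pair_comm] at h
  have hdisj : ∀ a b c d : V, a ≠ c → a ≠ d → b ≠ c → b ≠ d →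
      ∀ x, x ∈ ({a, b} : Finset V) → x ∉ ({c, d} : Finset V) := by
    intro a b c d hac had hbc hbd x hx hx'
    simp only [Finset.mem_insert, Finset.mem_singleton] at hx hx'
    rcases hx with rfl | rfl <;> rcases hx' with h | h <;>
      first | exact hac h | exact had h | exact hbc h | exact hbd h
  have hnomeet : ∀ p q r t : V, p ≠ r → p ≠ t → q ≠ r → q ≠ t →
      ¬(({p, q} : Finset V) ∩ {r, t}).Nonempty := by
    rintro p q r t h1 h2 h3 h4 ⟨z, hz⟩
    rw [Finset.mem_inter] at hz
    exact hdisj p q r t h1 h2 h3 h4 z hz.1 hz.2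
  -- a 2-set cannot meet all six edges of the K4
  have hkill : ∀ f : Finset V, f.card = 2 →
      (f ∩ {w, s1}).Nonempty → (f ∩ {s2, s3}).Nonempty →
      (f ∩ {w, s2}).Nonempty → (f ∩ {s1, s3}).Nonempty →
      (f ∩ {w, s3}).Nonempty → (f ∩ {s1, s2}).Nonempty → False := by
    intro f hf c1 c2 c3 c4 c5 c6
    obtain ⟨x, hx⟩ := c1
    obtain ⟨y, hy⟩ := c2
    rw [Finset.mem_inter] at hx hy
    have hxy : x ≠ y := fun h =>
      hdisj w s1 s2 s3 hw2 hw3 h12 h13 x hx.2 (h ▸ hy.2)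
    have hsub : ({x, y} : Finset V) ⊆ f := by
      intro t ht
      rcases Finset.mem_insert.mp ht with h | h
      · exact h ▸ hx.1
      · exact (Finset.mem_singleton.mp h) ▸ hy.1
    have hfeq : f = {x, y} :=
      (Finset.eq_of_subset_of_card_le hsub (by rw [hf, Finset.card_pair hxy])).symm
    rw [hfeq] at c3 c4 c5 c6
    have hx2 : x = w ∨ x = s1 := by
      have := hx.2
      simp only [Finset.mem_insert, Finset.mem_singleton] at this
      exact this
    have hy2 : y = s2 ∨ y = s3 := by
      have := hy.2
      simp only [Finset.mem_insert, Finset.mem_singleton] at this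
      exact this
    rcases hx2 with h | h <;> rcases hy2 with h' | h'
    · rw [h, h'] at c4
      exact hnomeet w s2 s1 s3 hw1 hw3 h12.symm h23 c4
    · rw [h, h'] at c6
      exact hnomeet w s3 s1 s2 hw1 hw2 h13.symm h23.symm c6
    · rw [h, h'] at c5
      exact hnomeet s1 s2 w s3 hw1.symm h13 hw2.symm h23 c5
    · rw [h, h'] at c3
      exact hnomeet s1 s3 w s2 hw1.symm h12 hw3.symm h23.symm c3
  -- disjoint edges lie in the same family
  have same : ∀ e1 ∈ A ∪ B, ∀ e2 ∈ A ∪ B, (∀ x, x ∈ e1 → x ∉ e2) →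
      (e1 ∈ A ∧ e2 ∈ A) ∨ (e1 ∈ B ∧ e2 ∈ B) := by
    intro e1 h1 e2 h2 hd
    rcases Finset.mem_union.mp h1 with hA1 | hB1 <;>
      rcases Finset.mem_union.mp h2 with hA2 | hB2
    · exact Or.inl ⟨hA1, hA2⟩
    · obtain ⟨x, hx⟩ := hcross e1 hA1 e2 hB2
      rw [Finset.mem_inter] at hx
      exact absurd hx.2 (hd x hx.1)
    · obtain ⟨x, hx⟩ := hcross e2 hA2 e1 hB1
      rw [Finset.mem_inter] at hx
      exact absurd hx.1 (hd x hx.2)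
    · exact Or.inr ⟨hB1, hB2⟩
  have dP1 := hdisj w s1 s2 s3 hw2 hw3 h12 h13
  have dP2 := hdisj w s2 s1 s3 hw1 hw3 h12.symm h23
  have dP3 := hdisj w s3 s1 s2 hw1 hw2 h13.symm h23.symm
  have hP1 := same {w, s1} ew1 {s2, s3} e23 dP1
  have hP2 := same {w, s2} ew2 {s1, s3} e13 dP2
  have hP3 := same {w, s3} ew3 {s1, s2} e12 dP3
  have subP1 : ({w, s1} : Finset V) ∪ {s2, s3} ⊆ ({w, s1, s2, s3} : Finset V) := by
    intro z hz
    simp only [Finset.mem_union, Finset.mem_insert, Finset.mem_singleton] at hz ⊢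
    tauto
  have subP2 : ({w, s2} : Finset V) ∪ {s1, s3} ⊆ ({w, s1, s2, s3} : Finset V) := by
    intro z hz
    simp only [Finset.mem_union, Finset.mem_insert, Finset.mem_singleton] at hz ⊢
    tauto
  have subP3 : ({w, s3} : Finset V) ∪ {s1, s2} ⊆ ({w, s1, s2, s3} : Finset V) := by
    intro z hz
    simp only [Finset.mem_union, Finset.mem_insert, Finset.mem_singleton] at hz ⊢
    tauto
  have main : ∀ X Y X' Y' : Finset V, (X ∈ A ∧ Y ∈ A) → (X' ∈ B ∧ Y' ∈ B) →
      (∀ x, x ∈ X → x ∉ Y) → (∀ x, x ∈ X' → x ∉ Y') →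
      X ∪ Y ⊆ ({w, s1, s2, s3} : Finset V) → X' ∪ Y' ⊆ ({w, s1, s2, s3} : Finset V) →
      ∀ e ∈ A ∪ B, e ⊆ ({w, s1, s2, s3} : Finset V) := by
    intro X Y X' Y' hXA hXB hdXY hdXY' hsub hsub' e he
    rcases Finset.mem_union.mp he with heA | heB
    · exact Finset.Subset.trans (edge_sub_union (hunif e he) hdXY'
        (hcross e heA X' hXB.1) (hcross e heA Y' hXB.2)) hsub'
    · exact Finset.Subset.trans (edge_sub_union (hunif e he) hdXY
        (by rw [Finset.inter_comm]; exact hcross X hXA.1 e heB)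
        (by rw [Finset.inter_comm]; exact hcross Y hXA.2 e heB)) hsub
  have hcontain : ∀ e ∈ A ∪ B, e ⊆ ({w, s1, s2, s3} : Finset V) := by
    rcases hP1 with h1 | h1 <;> rcases hP2 with h2 | h2 <;> rcases hP3 with h3 | h3
    · -- all in A : contradiction via b0
      exfalso
      refine hkill b0 hb0c ?_ ?_ ?_ ?_ ?_ ?_ <;> rw [Finset.inter_comm]
      · exact hcross _ h1.1 b0 hb0
      · exact hcross _ h1.2 b0 hb0
      · exact hcross _ h2.1 b0 hb0
      · exact hcross _ h2.2 b0 hb0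
      · exact hcross _ h3.1 b0 hb0
      · exact hcross _ h3.2 b0 hb0
    · exact main _ _ _ _ h1 h3 dP1 dP3 subP1 subP3
    · exact main _ _ _ _ h1 h2 dP1 dP2 subP1 subP2
    · exact main _ _ _ _ h1 h2 dP1 dP2 subP1 subP2
    · exact main _ _ _ _ h2 h1 dP2 dP1 subP2 subP1
    · exact main _ _ _ _ h2 h1 dP2 dP1 subP2 subP1
    · exact main _ _ _ _ h3 h1 dP3 dP1 subP3 subP1
    · -- all in B : contradiction via a0
      exfalso
      exact hkill a0 ha0c (hcross a0 ha0 _ h1.1) (hcross a0 ha0 _ h1.2)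
        (hcross a0 ha0 _ h2.1) (hcross a0 ha0 _ h2.2)
        (hcross a0 ha0 _ h3.1) (hcross a0 ha0 _ h3.2)
  refine ⟨w, s1, s2, s3, hw1, hw2, hw3, h12, h13, h23, ?_, fun _ _ => hcontain⟩
  intro p hp q hq hpq
  simp only [Finset.mem_insert, Finset.mem_singleton] at hp hq
  rcases hp with rfl | rfl | rfl | rfl <;> rcases hq with rfl | rfl | rfl | rfl <;>
    first
      | exact absurd rfl hpq
      | exact ew1 | exact ew2 | exact ew3
      | exact e12 | exact e13 | exact e23
      | exact hsymm _ _ ew1 | exact hsymm _ _ ew2 | exact hsymm _ _ ew3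
      | exact hsymm _ _ e12 | exact hsymm _ _ e13 | exact hsymm _ _ e23
end

section
/- Let H = (V, A ∪ B) be an n-uniform cross-intersecting family with min(|A|, |B|) ≥ 3. Then χ(H) ≤ 3. -/
lemma aux3 {V : Type*} [DecidableEq V] (A B : Finset (Finset V)) (n : ℕ)
    (hcross : ∀ a ∈ A, ∀ b ∈ B, (a ∩ b).Nonempty)
    (hunif : ∀ e ∈ A ∪ B, e.card = n)
    (a₁ b₁ : Finset V) (ha : a₁ ∈ A) (hb : b₁ ∈ B)
    (S T : Finset V) (hS : S.card < n)
    (hT : T.card < n ∨ (T ∉ A ∪ B ∧ T.card ≤ n))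
    (hcova : ∀ z ∈ a₁, z ∈ S ∨ z ∈ T) (hcovb : ∀ z ∈ b₁, z ∈ S ∨ z ∈ T) :
    ∃ c : V → Fin 3, ∀ e ∈ A ∪ B, ∃ x ∈ e, ∃ y ∈ e, c x ≠ c y := by
  classical
  refine ⟨fun z => if z ∈ S then 1 else if z ∈ T then 2 else 0, ?_⟩
  intro e he
  by_contra hmono
  push_neg at hmono
  have hecard : e.card = n := hunif e he
  have hne : e.Nonempty := by
    rw [← Finset.card_pos, hecard]; omega
  obtain ⟨z₀, hz₀⟩ := hne
  have hsame : ∀ z ∈ e, (if z ∈ S then (1:Fin 3) else if z ∈ T then 2 else 0)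
      = (if z₀ ∈ S then (1:Fin 3) else if z₀ ∈ T then 2 else 0) := fun z hz => hmono z hz z₀ hz₀
  by_cases h1 : z₀ ∈ S
  · have hsub : e ⊆ S := by
      intro z hz
      have h := hsame z hz
      simp only [h1, if_true] at h
      by_contra hzS
      by_cases hzT : z ∈ T <;> simp [hzS, hzT] at h
    have := Finset.card_le_card hsub
    omega
  · by_cases h2 : z₀ ∈ T
    · have heT : e ⊆ T := by
        intro z hz
        have h := hsame z hz
        simp only [h1, if_false, h2, if_true] at h
        by_contra hzT
        by_cases hzS : z ∈ S <;> simp [hzS, hzT] at h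
      rcases hT with hT | ⟨hTmem, hTcard⟩
      · have := Finset.card_le_card heT; omega
      · have heq : e = T := Finset.eq_of_subset_of_card_le heT (by omega)
        exact hTmem (heq ▸ he)
    · have h0 : ∀ z ∈ e, z ∉ S ∧ z ∉ T := by
        intro z hz
        have h := hsame z hz
        simp only [h1, if_false, h2] at h
        constructor
        · by_contra hzS; simp [hzS] at h
        · by_contra hzT; by_cases hzS : z ∈ S <;> simp [hzS, hzT] at h
      rcases Finset.mem_union.mp he with heA | heB
      · obtain ⟨w, hw⟩ := hcross e heA b₁ hb
        rw [Finset.mem_inter] at hw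
        rcases hcovb w hw.2 with h | h
        · exact (h0 w hw.1).1 h
        · exact (h0 w hw.1).2 h
      · obtain ⟨w, hw⟩ := hcross a₁ ha e heB
        rw [Finset.mem_inter] at hw
        rcases hcova w hw.1 with h | h
        · exact (h0 w hw.2).1 h
        · exact (h0 w hw.2).2 h

lemma pair_other {V : Type*} [DecidableEq V] {a : Finset V} {x : V}
    (h2 : a.card = 2) (hx : x ∈ a) : ∃ s, s ≠ x ∧ a = {x, s} := by
  obtain ⟨u, v, huv, rfl⟩ := Finset.card_eq_two.mp h2
  rcases Finset.mem_insert.mp hx with rfl | h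
  · exact ⟨v, huv.symm, rfl⟩
  · have hxv : x = v := Finset.mem_singleton.mp h
    subst hxv
    exact ⟨u, huv, by rw [Finset.pair_comm]⟩

/-- An `n`-uniform cross-intersecting family with `min (|A|, |B|) ≥ 3`
has chromatic number at most 3. -/
theorem stmt4 {V : Type*} [DecidableEq V]
    (A B : Finset (Finset V)) (n : ℕ)
    (hA : 3 ≤ A.card) (hB : 3 ≤ B.card)
    (hcross : ∀ a ∈ A, ∀ b ∈ B, (a ∩ b).Nonempty)
    (hunif : ∀ e ∈ A ∪ B, e.card = n) :
    ∃ c : V → Fin 3, ∀ e ∈ A ∪ B, ∃ x ∈ e, ∃ y ∈ e, c x ≠ c y := by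
  classical
  obtain ⟨a₀, ha₀⟩ := Finset.card_pos.mp (by omega : 0 < A.card)
  obtain ⟨b₀, hb₀⟩ := Finset.card_pos.mp (by omega : 0 < B.card)
  have hua : a₀.card = n := hunif a₀ (Finset.mem_union_left _ ha₀)
  have hub : b₀.card = n := hunif b₀ (Finset.mem_union_right _ hb₀)
  -- n ≥ 2
  have hn2 : 2 ≤ n := by
    by_contra hlt
    push_neg at hlt
    interval_cases n
    · obtain ⟨w, hw⟩ := hcross a₀ ha₀ b₀ hb₀
      have : w ∈ a₀ := (Finset.mem_inter.mp hw).1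
      rw [Finset.card_eq_zero.mp hua] at this
      exact absurd this (Finset.notMem_empty w)
    · -- n = 1 : every a ∈ A equals b₀
      have hall : ∀ a ∈ A, a = b₀ := by
        intro a ha
        obtain ⟨w, hw⟩ := hcross a ha b₀ hb₀
        rw [Finset.mem_inter] at hw
        have h1 : ({w} : Finset V) = a := Finset.eq_of_subset_of_card_le
          (Finset.singleton_subset_iff.mpr hw.1)
          (by rw [hunif a (Finset.mem_union_left _ ha)]; simp)
        have h2 : ({w} : Finset V) = b₀ := Finset.eq_of_subset_of_card_le
          (Finset.singleton_subset_iff.mpr hw.2) (by rw [hub]; simp)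
        rw [← h1, h2]
      have : A.card ≤ 1 := Finset.card_le_one.mpr
        (fun a ha b hb => by rw [hall a ha, hall b hb])
      omega
  by_cases hcase1 : ∃ a ∈ A, ∃ b ∈ B, 2 ≤ (a ∩ b).card
  · -- CASE 1: some pair intersects in ≥ 2 points
    obtain ⟨a, ha, b, hb, hab⟩ := hcase1
    obtain ⟨x, hx, y, hy, hxy⟩ := Finset.one_lt_card.mp hab
    have hxa := (Finset.mem_inter.mp hx).1
    have hxb := (Finset.mem_inter.mp hx).2
    have hya := (Finset.mem_inter.mp hy).1
    have hyb := (Finset.mem_inter.mp hy).2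
    have hacard : a.card = n := hunif a (Finset.mem_union_left _ ha)
    have hbcard : b.card = n := hunif b (Finset.mem_union_right _ hb)
    apply aux3 A B n hcross hunif a b ha hb (a.erase y) (b.erase x)
    · rw [Finset.card_erase_of_mem hya, hacard]; omega
    · left; rw [Finset.card_erase_of_mem hxb, hbcard]; omega
    · intro z hz
      by_cases hzy : z = y
      · right; exact Finset.mem_erase.mpr ⟨by rw [hzy]; exact hxy.symm, by rw [hzy]; exact hyb⟩
      · left; exact Finset.mem_erase.mpr ⟨hzy, hz⟩
    · intro z hz
      by_cases hzx : z = x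
      · left; exact Finset.mem_erase.mpr ⟨by rw [hzx]; exact hxy, by rw [hzx]; exact hxa⟩
      · right; exact Finset.mem_erase.mpr ⟨hzx, hz⟩
  · -- CASE 2: every pair intersects in exactly one point
    push_neg at hcase1
    by_cases hn3 : 3 ≤ n
    · -- n ≥ 3
      have hcard1 : (a₀ ∩ b₀).card = 1 := by
        have h1 := hcase1 a₀ ha₀ b₀ hb₀
        have h2 := Finset.card_pos.mpr (hcross a₀ ha₀ b₀ hb₀)
        omega
      obtain ⟨x, hx⟩ := Finset.card_eq_one.mp hcard1
      have hxm : x ∈ a₀ ∩ b₀ := hx ▸ Finset.mem_singleton_self x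
      have hxa := (Finset.mem_inter.mp hxm).1
      have hxb := (Finset.mem_inter.mp hxm).2
      have honly : ∀ z, z ∈ a₀ → z ∈ b₀ → z = x := fun z h1 h2 =>
        Finset.mem_singleton.mp (hx ▸ Finset.mem_inter.mpr ⟨h1, h2⟩)
      obtain ⟨u, hu⟩ : (a₀.erase x).Nonempty := by
        rw [← Finset.card_pos, Finset.card_erase_of_mem hxa, hua]; omega
      have hux : u ≠ x := (Finset.mem_erase.mp hu).1
      have hua2 : u ∈ a₀ := (Finset.mem_erase.mp hu).2
      have hub2 : u ∉ b₀ := fun h => hux (honly u hua2 h)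
      obtain ⟨v, hv⟩ : (b₀.erase x).Nonempty := by
        rw [← Finset.card_pos, Finset.card_erase_of_mem hxb, hub]; omega
      have hvx : v ≠ x := (Finset.mem_erase.mp hv).1
      have hvb2 : v ∈ b₀ := (Finset.mem_erase.mp hv).2
      have hva2 : v ∉ a₀ := fun h => hvx (honly v h hvb2)
      have huv : u ≠ v := fun h => hub2 (h ▸ hvb2)
      set T₁ := insert u (b₀.erase x) with hT₁def
      set T₂ := insert v (a₀.erase x) with hT₂def
      have hT₁card : T₁.card = n := by
        rw [hT₁def, Finset.card_insert_of_notMem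
          (fun h => hub2 (Finset.mem_of_mem_erase h)),
          Finset.card_erase_of_mem hxb, hub]
        omega
      have hT₂card : T₂.card = n := by
        rw [hT₂def, Finset.card_insert_of_notMem
          (fun h => hva2 (Finset.mem_of_mem_erase h)),
          Finset.card_erase_of_mem hxa, hua]
        omega
      by_cases hT₁mem : T₁ ∈ A ∪ B
      · have hT₁B : T₁ ∈ B := by
          rcases Finset.mem_union.mp hT₁mem with h | h
          · exfalso
            have hsub : b₀.erase x ⊆ T₁ ∩ b₀ := fun z hz =>
              Finset.mem_inter.mpr ⟨Finset.mem_insert_of_mem hz, Finset.mem_of_mem_erase hz⟩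
            have h1 := Finset.card_le_card hsub
            rw [Finset.card_erase_of_mem hxb, hub] at h1
            have h2 := hcase1 T₁ h b₀ hb₀
            omega
          · exact h
        by_cases hT₂mem : T₂ ∈ A ∪ B
        · exfalso
          have hT₂A : T₂ ∈ A := by
            rcases Finset.mem_union.mp hT₂mem with h | h
            · exact h
            · exfalso
              have hsub : a₀.erase x ⊆ a₀ ∩ T₂ := fun z hz =>
                Finset.mem_inter.mpr ⟨Finset.mem_of_mem_erase hz, Finset.mem_insert_of_mem hz⟩
              have h1 := Finset.card_le_card hsub
              rw [Finset.card_erase_of_mem hxa, hua] at h1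
              have h2 := hcase1 a₀ ha₀ T₂ h
              omega
          have h2 := hcase1 T₂ hT₂A T₁ hT₁B
          have h3 : 1 < (T₂ ∩ T₁).card := Finset.one_lt_card.mpr
            ⟨u, Finset.mem_inter.mpr
                ⟨Finset.mem_insert_of_mem (Finset.mem_erase.mpr ⟨hux, hua2⟩),
                 Finset.mem_insert_self _ _⟩,
             v, Finset.mem_inter.mpr
                ⟨Finset.mem_insert_self _ _,
                 Finset.mem_insert_of_mem (Finset.mem_erase.mpr ⟨hvx, hvb2⟩)⟩,
             huv⟩
          omega
        · -- use T₂ = insert v (a₀.erase x), roles of A and B swapped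
          have hcross' : ∀ b ∈ B, ∀ a ∈ A, (b ∩ a).Nonempty := fun b hb a ha => by
            rw [Finset.inter_comm]; exact hcross a ha b hb
          have hunif' : ∀ e ∈ B ∪ A, e.card = n := fun e he =>
            hunif e (by rwa [Finset.union_comm])
          have haux := aux3 B A n hcross' hunif' b₀ a₀ hb₀ ha₀ (b₀.erase v) T₂
            (by rw [Finset.card_erase_of_mem hvb2, hub]; omega)
            (Or.inr ⟨by rwa [Finset.union_comm], le_of_eq hT₂card⟩)
            (by
              intro z hz
              by_cases hzv : z = v
              · right; rw [hT₂def, hzv]; exact Finset.mem_insert_self _ _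
              · left; exact Finset.mem_erase.mpr ⟨hzv, hz⟩)
            (by
              intro z hz
              by_cases hzx : z = x
              · left
                exact Finset.mem_erase.mpr ⟨by rw [hzx]; exact fun h => hvx h.symm, by rw [hzx]; exact hxb⟩
              · right
                exact Finset.mem_insert_of_mem (Finset.mem_erase.mpr ⟨hzx, hz⟩))
          obtain ⟨c, hc⟩ := haux
          exact ⟨c, fun e he => hc e (by rwa [Finset.union_comm])⟩
      · -- T₁ ∉ A ∪ B : direct application
        apply aux3 A B n hcross hunif a₀ b₀ ha₀ hb₀ (a₀.erase u) T₁
        · rw [Finset.card_erase_of_mem hua2, hua]; omega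
        · exact Or.inr ⟨hT₁mem, le_of_eq hT₁card⟩
        · intro z hz
          by_cases hzu : z = u
          · right; rw [hT₁def, hzu]; exact Finset.mem_insert_self _ _
          · left; exact Finset.mem_erase.mpr ⟨hzu, hz⟩
        · intro z hz
          by_cases hzx : z = x
          · left; exact Finset.mem_erase.mpr ⟨by rw [hzx]; exact fun h => hux h.symm, by rw [hzx]; exact hxa⟩
          · right; exact Finset.mem_insert_of_mem (Finset.mem_erase.mpr ⟨hzx, hz⟩)
    · -- n = 2
      have hn : n = 2 := by omega
      subst hn
      obtain ⟨x₀, v₀, hxv, hb0eq⟩ := Finset.card_eq_two.mp hub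
      -- every a ∈ A contains x₀ or v₀
      have hmemA : ∀ a ∈ A, x₀ ∈ a ∨ v₀ ∈ a := by
        intro a ha
        obtain ⟨w, hw⟩ := hcross a ha b₀ hb₀
        rw [Finset.mem_inter, hb0eq] at hw
        rcases Finset.mem_insert.mp hw.2 with rfl | h
        · exact Or.inl hw.1
        · rw [Finset.mem_singleton.mp h] at hw
          exact Or.inr hw.1
      -- find a vertex x of b₀ in at least two edges of A
      obtain ⟨x, hxb0, hx2⟩ : ∃ x, x ∈ b₀ ∧ 2 ≤ (A.filter (fun a => x ∈ a)).card := by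
        by_contra hcon
        push_neg at hcon
        have h1 : A ⊆ A.filter (fun a => x₀ ∈ a) ∪ A.filter (fun a => v₀ ∈ a) := by
          intro a ha
          rcases hmemA a ha with h | h
          · exact Finset.mem_union_left _ (Finset.mem_filter.mpr ⟨ha, h⟩)
          · exact Finset.mem_union_right _ (Finset.mem_filter.mpr ⟨ha, h⟩)
        have h2 := Finset.card_le_card h1
        have h3 := Finset.card_union_le (A.filter (fun a => x₀ ∈ a)) (A.filter (fun a => v₀ ∈ a))
        have h4 := hcon x₀ (by rw [hb0eq]; simp)
        have h5 := hcon v₀ (by rw [hb0eq]; simp)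
        omega
      obtain ⟨a, haf, a', haf', haa'⟩ := Finset.one_lt_card.mp hx2
      have haA : a ∈ A := (Finset.mem_filter.mp haf).1
      have hxa : x ∈ a := (Finset.mem_filter.mp haf).2
      have haA' : a' ∈ A := (Finset.mem_filter.mp haf').1
      have hxa' : x ∈ a' := (Finset.mem_filter.mp haf').2
      obtain ⟨s, hsx, haeq⟩ := pair_other (hunif a (Finset.mem_union_left _ haA)) hxa
      obtain ⟨t, htx, haeq'⟩ := pair_other (hunif a' (Finset.mem_union_left _ haA')) hxa'
      have hst : s ≠ t := fun h => haa' (by rw [haeq, haeq', h])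
      -- any b ∈ B avoiding x equals {s, t}
      have hBx : ∀ b ∈ B, x ∉ b → b = {s, t} := by
        intro b hb hxbn
        have hsb : s ∈ b := by
          obtain ⟨w, hw⟩ := hcross a haA b hb
          rw [Finset.mem_inter, haeq] at hw
          rcases Finset.mem_insert.mp hw.1 with rfl | h
          · exact absurd hw.2 hxbn
          · rw [← Finset.mem_singleton.mp h]; exact hw.2
        have htb : t ∈ b := by
          obtain ⟨w, hw⟩ := hcross a' haA' b hb
          rw [Finset.mem_inter, haeq'] at hw
          rcases Finset.mem_insert.mp hw.1 with rfl | h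
          · exact absurd hw.2 hxbn
          · rw [← Finset.mem_singleton.mp h]; exact hw.2
        have hsub : ({s, t} : Finset V) ⊆ b :=
          Finset.insert_subset_iff.mpr ⟨hsb, Finset.singleton_subset_iff.mpr htb⟩
        refine (Finset.eq_of_subset_of_card_le hsub ?_).symm
        rw [hunif b (Finset.mem_union_right _ hb),
          Finset.card_insert_of_notMem (by simp [hst]), Finset.card_singleton]
      -- at least two B-edges contain x
      have hBfx : 2 ≤ (B.filter (fun b => x ∈ b)).card := by
        have hsubB : B ⊆ B.filter (fun b => x ∈ b) ∪ {({s, t} : Finset V)} := by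
          intro b hb
          by_cases hxbn : x ∈ b
          · exact Finset.mem_union_left _ (Finset.mem_filter.mpr ⟨hb, hxbn⟩)
          · exact Finset.mem_union_right _ (by rw [hBx b hb hxbn]; simp)
        have h1 := Finset.card_le_card hsubB
        have h2 : (B.filter (fun b => x ∈ b) ∪ {({s, t} : Finset V)}).card
            ≤ (B.filter (fun b => x ∈ b)).card + 1 :=
          le_trans (Finset.card_union_le _ _) (by simp)
        omega
      obtain ⟨b, hbf, b', hbf', hbb'⟩ := Finset.one_lt_card.mp hBfx
      have hbB : b ∈ B := (Finset.mem_filter.mp hbf).1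
      have hxbm : x ∈ b := (Finset.mem_filter.mp hbf).2
      have hbB' : b' ∈ B := (Finset.mem_filter.mp hbf').1
      have hxbm' : x ∈ b' := (Finset.mem_filter.mp hbf').2
      obtain ⟨p, hpx, hbeq⟩ := pair_other (hunif b (Finset.mem_union_right _ hbB)) hxbm
      obtain ⟨q, hqx, hbeq'⟩ := pair_other (hunif b' (Finset.mem_union_right _ hbB')) hxbm'
      have hpq : p ≠ q := fun h => hbb' (by rw [hbeq, hbeq', h])
      -- two common vertices with one of them ≠ x is impossible
      have key : ∀ w₁, w₁ ≠ x → ∀ e₁ ∈ A, ∀ e₂ ∈ B, x ∈ e₁ → x ∈ e₂ → w₁ ∈ e₁ → w₁ ∈ e₂ → False := by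
        intro w₁ hw₁ e₁ he₁ e₂ he₂ hx1 hx2' hw11 hw12
        have h := hcase1 e₁ he₁ e₂ he₂
        have h2 : 1 < (e₁ ∩ e₂).card := Finset.one_lt_card.mpr
          ⟨x, Finset.mem_inter.mpr ⟨hx1, hx2'⟩,
           w₁, Finset.mem_inter.mpr ⟨hw11, hw12⟩, fun hh => hw₁ hh.symm⟩
        omega
      have hsp : s ≠ p := fun h => key s hsx a haA b hbB hxa hxbm
        (by rw [haeq]; simp) (by rw [hbeq, h]; simp)
      have hsq : s ≠ q := fun h => key s hsx a haA b' hbB' hxa hxbm'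
        (by rw [haeq]; simp) (by rw [hbeq', h]; simp)
      have htp : t ≠ p := fun h => key t htx a' haA' b hbB hxa' hxbm
        (by rw [haeq']; simp) (by rw [hbeq, h]; simp)
      have htq : t ≠ q := fun h => key t htx a' haA' b' hbB' hxa' hxbm'
        (by rw [haeq']; simp) (by rw [hbeq', h]; simp)
      refine ⟨fun z => if z = x then 0 else if z = q ∨ z = t then 2 else 1, ?_⟩
      intro e he
      have hecard : e.card = 2 := hunif e he
      by_cases hxe : x ∈ e
      · obtain ⟨y, hy, hyx⟩ := Finset.exists_mem_ne (s := e) (by omega) x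
        refine ⟨x, hxe, y, hy, ?_⟩
        show (if x = x then (0:Fin 3) else if x = q ∨ x = t then 2 else 1)
            ≠ (if y = x then (0:Fin 3) else if y = q ∨ y = t then 2 else 1)
        rw [if_pos rfl, if_neg hyx]
        split_ifs <;> decide
      · rcases Finset.mem_union.mp he with heA | heB
        · have hpe : p ∈ e := by
            obtain ⟨w, hw⟩ := hcross e heA b hbB
            rw [Finset.mem_inter, hbeq] at hw
            rcases Finset.mem_insert.mp hw.2 with rfl | h
            · exact absurd hw.1 hxe
            · rw [← Finset.mem_singleton.mp h]; exact hw.1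
          have hqe : q ∈ e := by
            obtain ⟨w, hw⟩ := hcross e heA b' hbB'
            rw [Finset.mem_inter, hbeq'] at hw
            rcases Finset.mem_insert.mp hw.2 with rfl | h
            · exact absurd hw.1 hxe
            · rw [← Finset.mem_singleton.mp h]; exact hw.1
          refine ⟨p, hpe, q, hqe, ?_⟩
          show (if p = x then (0:Fin 3) else if p = q ∨ p = t then 2 else 1)
            ≠ (if q = x then (0:Fin 3) else if q = q ∨ q = t then 2 else 1)
          rw [if_neg hpx, if_neg (show ¬(p = q ∨ p = t) by rintro (h | h); exacts [hpq h, htp h.symm]),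
            if_neg hqx, if_pos (Or.inl rfl)]
          decide
        · have hse : s ∈ e := by
            obtain ⟨w, hw⟩ := hcross a haA e heB
            rw [Finset.mem_inter, haeq] at hw
            rcases Finset.mem_insert.mp hw.1 with rfl | h
            · exact absurd hw.2 hxe
            · rw [← Finset.mem_singleton.mp h]; exact hw.2
          have hte : t ∈ e := by
            obtain ⟨w, hw⟩ := hcross a' haA' e heB
            rw [Finset.mem_inter, haeq'] at hw
            rcases Finset.mem_insert.mp hw.1 with rfl | h
            · exact absurd hw.2 hxe
            · rw [← Finset.mem_singleton.mp h]; exact hw.2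
          refine ⟨s, hse, t, hte, ?_⟩
          show (if s = x then (0:Fin 3) else if s = q ∨ s = t then 2 else 1)
            ≠ (if t = x then (0:Fin 3) else if t = q ∨ t = t then 2 else 1)
          rw [if_neg hsx, if_neg (show ¬(s = q ∨ s = t) by rintro (h | h); exacts [hsq h, hst h]),
            if_neg htx, if_pos (Or.inr rfl)]
          decide
end

section
/- Let H = (V, A ∪ B) be a critical cross-intersecting family and let n be the maximum edge size over A ∪ B. Then max(|A|, |B|) ≤ n^n. -/
/-!
Fix `S ⊆ b ∈ B`. If `S ≠ b`, criticality of `b` at a vertex of `b \ S` yields an edge `a ∈ A`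
disjoint from `S`, and `b` must meet `a` in a vertex outside `S`. So the members of `B`
containing `S` are covered by the at most `n` families of members containing `insert v S`,
`v ∈ a`, unless `S` itself is the only one. Downward induction on `S` gives at most
`n ^ (n - #S)` members of `B` above `S`; take `S = ∅`.
-/

open Finset

section

variable {V : Type*} [DecidableEq V] {A B : Finset (Finset V)} {n : ℕ}

lemma exists_disjoint_of_ssubset_of_critical
    (hcrit : ∀ b ∈ B, ∀ v ∈ b, ∃ a ∈ A, a ∩ b = {v}) {b S : Finset V} (hb : b ∈ B)
    (hSb : S ⊂ b) : ∃ a ∈ A, Disjoint a S := by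
  obtain ⟨v, hvb, hvS⟩ := exists_of_ssubset hSb
  obtain ⟨a, ha, hab⟩ := hcrit b hb v hvb
  refine ⟨a, ha, disjoint_left.2 fun u hua huS => hvS ?_⟩
  have hu : u ∈ a ∩ b := mem_inter.2 ⟨hua, hSb.subset huS⟩
  rw [hab, mem_singleton] at hu
  rwa [← hu]

lemma card_filter_superset_le_pow (hcross : ∀ a ∈ A, ∀ b ∈ B, (a ∩ b).Nonempty)
    (hcrit : ∀ b ∈ B, ∀ v ∈ b, ∃ a ∈ A, a ∩ b = {v})
    (hA : ∀ a ∈ A, #a ≤ n) (hB : ∀ b ∈ B, #b ≤ n) (S : Finset V) (hS : #S ≤ n) :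
    #{b ∈ B | S ⊆ b} ≤ n ^ (n - #S) := by
  refine strongDownwardInductionOn S (fun S ih hS => ?_) hS
  by_cases honly : {b ∈ B | S ⊆ b} ⊆ {S}
  · calc #{b ∈ B | S ⊆ b} ≤ #{S} := card_le_card honly
      _ = 1 := card_singleton S
      _ ≤ n ^ (n - #S) := by
        rcases n.eq_zero_or_pos with rfl | hn
        · simp
        · exact Nat.one_le_pow _ _ hn
  obtain ⟨b, hbS, hbne⟩ := not_subset.1 honly
  obtain ⟨hb, hSb⟩ := mem_filter.1 hbS
  have hSb : S ⊂ b := ssubset_of_subset_of_ne hSb (Ne.symm (by simpa using hbne))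
  have hSn : #S < n := (card_lt_card hSb).trans_le (hB b hb)
  obtain ⟨a, ha, hdisj⟩ := exists_disjoint_of_ssubset_of_critical hcrit hb hSb
  have hcover : {b ∈ B | S ⊆ b} ⊆ a.biUnion fun v => {b ∈ B | insert v S ⊆ b} := by
    intro b' hb'
    obtain ⟨hb', hSb'⟩ := mem_filter.1 hb'
    obtain ⟨v, hv⟩ := hcross a ha b' hb'
    obtain ⟨hva, hvb'⟩ := mem_inter.1 hv
    exact mem_biUnion.2 ⟨v, hva, mem_filter.2 ⟨hb', insert_subset hvb' hSb'⟩⟩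
  have hstep : ∀ v ∈ a, #{b ∈ B | insert v S ⊆ b} ≤ n ^ (n - (#S + 1)) := by
    intro v hva
    have hvS : v ∉ S := disjoint_left.1 hdisj hva
    rw [← card_insert_of_notMem hvS]
    exact ih (by rw [card_insert_of_notMem hvS]; omega) (ssubset_insert hvS)
  calc #{b ∈ B | S ⊆ b} ≤ #a * n ^ (n - (#S + 1)) :=
        (card_le_card hcover).trans (card_biUnion_le_card_mul _ _ _ hstep)
    _ ≤ n * n ^ (n - (#S + 1)) := Nat.mul_le_mul_right _ (hA a ha)
    _ = n ^ (n - #S) := by rw [← pow_succ']; congr 1; omega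

lemma card_le_pow_self_of_critical (hcross : ∀ a ∈ A, ∀ b ∈ B, (a ∩ b).Nonempty)
    (hcrit : ∀ b ∈ B, ∀ v ∈ b, ∃ a ∈ A, a ∩ b = {v})
    (hA : ∀ a ∈ A, #a ≤ n) (hB : ∀ b ∈ B, #b ≤ n) : #B ≤ n ^ n := by
  simpa using card_filter_superset_le_pow hcross hcrit hA hB ∅ (by simp)

end

theorem stmt6_general {V : Type*} [DecidableEq V]
    (A B : Finset (Finset V)) (n : ℕ)
    (hcross : ∀ a ∈ A, ∀ b ∈ B, (a ∩ b).Nonempty)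
    (hcritA : ∀ a ∈ A, ∀ v ∈ a, ∃ b ∈ B, a ∩ b = {v})
    (hcritB : ∀ b ∈ B, ∀ v ∈ b, ∃ a ∈ A, a ∩ b = {v})
    (hmax : ∀ e ∈ A ∪ B, e.card ≤ n) :
    max A.card B.card ≤ n ^ n := by
  have hmaxA : ∀ a ∈ A, #a ≤ n := fun a ha => hmax a (mem_union_left _ ha)
  have hmaxB : ∀ b ∈ B, #b ≤ n := fun b hb => hmax b (mem_union_right _ hb)
  refine max_le ?_ (card_le_pow_self_of_critical hcross hcritB hmaxA hmaxB)
  refine card_le_pow_self_of_critical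
    (fun b hb a ha => inter_comm a b ▸ hcross a ha b hb) ?_ hmaxB hmaxA
  intro a ha v hv
  obtain ⟨b, hb, hab⟩ := hcritA a ha v hv
  exact ⟨b, hb, inter_comm a b ▸ hab⟩

/-- a critical cross-intersecting family with maximum edge size `n`
satisfies `max (|A|, |B|) ≤ n ^ n`. -/
theorem stmt6 {V : Type*} [DecidableEq V]
    (A B : Finset (Finset V)) (n : ℕ)
    (hA : A.Nonempty) (hB : B.Nonempty)
    (hcross : ∀ a ∈ A, ∀ b ∈ B, (a ∩ b).Nonempty)
    (hcritA : ∀ a ∈ A, ∀ v ∈ a, ∃ b ∈ B, a ∩ b = {v})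
    (hcritB : ∀ b ∈ B, ∀ v ∈ b, ∃ a ∈ A, a ∩ b = {v})
    (hmax : ∀ e ∈ A ∪ B, e.card ≤ n)
    (hmax' : ∃ e ∈ A ∪ B, e.card = n) :
    max A.card B.card ≤ n ^ n :=
  stmt6_general A B n hcross hcritA hcritB hmax
end

section
/- If H = (V, E) is an n-uniform intersecting family with covering number τ(H) = n, then the triple (V, E, E) is a critical cross-intersecting family, i.e., for every e ∈ E and every v ∈ e there exists f ∈ E with e ∩ f = {v}. -/
/-! The set `e \ {v}` has `n - 1 < τ(H)` points, so some edge `f` misses it; since `f` meets `e`,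
this forces `e ∩ f = {v}`. -/

namespace Finset

variable {α : Type*} [DecidableEq α]

theorem inter_eq_singleton_of_disjoint_sdiff {e f : Finset α} {v : α}
    (hef : (e ∩ f).Nonempty) (hdisj : Disjoint f (e \ {v})) : e ∩ f = {v} := by
  refine hef.subset_singleton_iff.mp fun x hx => mem_singleton.mpr ?_
  by_contra hxv
  obtain ⟨hxe, hxf⟩ := mem_inter.mp hx
  exact disjoint_left.mp hdisj hxf (mem_sdiff.mpr ⟨hxe, notMem_singleton.mpr hxv⟩)

theorem exists_disjoint_of_card_lt_cover {E : Finset (Finset α)} {n : ℕ}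
    (hcov : ∀ T : Finset α, (∀ e ∈ E, (e ∩ T).Nonempty) → n ≤ T.card)
    {T : Finset α} (hT : T.card < n) : ∃ f ∈ E, Disjoint f T := by
  by_contra! h
  exact hT.not_ge (hcov T fun f hf => not_disjoint_iff_nonempty_inter.mp (h f hf))

end Finset

theorem stmt7_general {V : Type*} [DecidableEq V]
    (E : Finset (Finset V)) (n : ℕ)
    (hunif : ∀ e ∈ E, e.card = n)
    (hint : ∀ e ∈ E, ∀ f ∈ E, (e ∩ f).Nonempty)
    (htau : IsLeast {m : ℕ | ∃ T : Finset V, T.card = m ∧ ∀ e ∈ E, (e ∩ T).Nonempty} n) :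
    ∀ e ∈ E, ∀ v ∈ e, ∃ f ∈ E, e ∩ f = {v} := by
  intro e he v hv
  have hcard : (e \ {v}).card < n := by
    rw [← hunif e he]
    exact Finset.card_lt_card
      (Finset.sdiff_ssubset (Finset.singleton_subset_iff.mpr hv) (Finset.singleton_nonempty v))
  obtain ⟨f, hf, hdisj⟩ :=
    Finset.exists_disjoint_of_card_lt_cover (fun T hT => htau.2 ⟨T, rfl, hT⟩) hcard
  exact ⟨f, hf, Finset.inter_eq_singleton_of_disjoint_sdiff (hint e he f hf) hdisj⟩

/-- an `n`-uniform intersecting family with covering number exactly `n`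
yields a critical cross-intersecting family `(V, E, E)`: for every edge `e` and every
`v ∈ e` there is an edge `f` with `e ∩ f = {v}`. -/
theorem stmt7 {V : Type*} [DecidableEq V]
    (E : Finset (Finset V)) (n : ℕ)
    (hne : E.Nonempty)
    (hunif : ∀ e ∈ E, e.card = n)
    (hint : ∀ e ∈ E, ∀ f ∈ E, (e ∩ f).Nonempty)
    (htau : IsLeast {m : ℕ | ∃ T : Finset V, T.card = m ∧ ∀ e ∈ E, (e ∩ T).Nonempty} n) :
    ∀ e ∈ E, ∀ v ∈ e, ∃ f ∈ E, e ∩ f = {v} :=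
  stmt7_general E n hunif hint htau
end

section
/- The grid cross-intersecting family (rows A and transversals B of an n × n grid, n > 1) is critical: for every a ∈ A and v ∈ a there is b ∈ B with a ∩ b = {v}, and for every b ∈ B and v ∈ b there is a ∈ A with a ∩ b = {v}. Hence the bound max(|A|,|B|) ≤ n^n for critical cross-intersecting families is tight. -/
/-- the grid cross-intersecting family (rows and transversals of an
`n × n` grid, `n > 1`) is critical, and it attains the bound `max (|A|, |B|) = n ^ n`,
showing the `n ^ n` bound for critical cross-intersecting families is tight. -/
theorem stmt9 (n : ℕ) (hn : 1 < n)
    (A B : Finset (Finset (Fin n × Fin n)))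
    (hAdef : A = Finset.univ.image
      (fun i : Fin n => Finset.univ.image (fun j : Fin n => (i, j))))
    (hBdef : B = Finset.univ.image
      (fun f : Fin n → Fin n => Finset.univ.image (fun i : Fin n => (i, f i)))) :
    (∀ a ∈ A, ∀ v ∈ a, ∃ b ∈ B, a ∩ b = {v}) ∧
    (∀ b ∈ B, ∀ v ∈ b, ∃ a ∈ A, a ∩ b = {v}) ∧
    max A.card B.card = n ^ n := by
  subst hAdef hBdef
  refine ⟨?_, ?_, ?_⟩
  · intro a ha v hv
    simp only [Finset.mem_image, Finset.mem_univ, true_and] at ha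
    obtain ⟨i, rfl⟩ := ha
    simp only [Finset.mem_image, Finset.mem_univ, true_and] at hv
    obtain ⟨j, rfl⟩ := hv
    refine ⟨Finset.univ.image (fun k : Fin n => (k, j)), ?_, ?_⟩
    · exact Finset.mem_image.2 ⟨fun _ => j, Finset.mem_univ _, rfl⟩
    · ext ⟨x, y⟩
      simp only [Finset.mem_inter, Finset.mem_image, Finset.mem_univ, true_and,
        Finset.mem_singleton, Prod.mk.injEq]
      aesop
  · intro b hb v hv
    simp only [Finset.mem_image, Finset.mem_univ, true_and] at hb
    obtain ⟨f, rfl⟩ := hb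
    simp only [Finset.mem_image, Finset.mem_univ, true_and] at hv
    obtain ⟨i, rfl⟩ := hv
    refine ⟨Finset.univ.image (fun j : Fin n => (i, j)), ?_, ?_⟩
    · exact Finset.mem_image.2 ⟨i, Finset.mem_univ _, rfl⟩
    · ext ⟨x, y⟩
      simp only [Finset.mem_inter, Finset.mem_image, Finset.mem_univ, true_and,
        Finset.mem_singleton, Prod.mk.injEq]
      aesop
  · have hA : (Finset.univ.image
        (fun i : Fin n => Finset.univ.image (fun j : Fin n => (i, j)))).card = n := by
      rw [Finset.card_image_of_injective _ ?_, Finset.card_univ, Fintype.card_fin]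
      intro i i' h
      dsimp only at h
      have : (i, (⟨0, by omega⟩ : Fin n)) ∈ Finset.univ.image (fun j : Fin n => (i', j)) := by
        rw [← h]; exact Finset.mem_image.2 ⟨⟨0, by omega⟩, Finset.mem_univ _, rfl⟩
      simp only [Finset.mem_image, Finset.mem_univ, true_and, Prod.mk.injEq] at this
      obtain ⟨j, hj, -⟩ := this
      exact hj.symm
    have hB : (Finset.univ.image
        (fun f : Fin n → Fin n => Finset.univ.image (fun i : Fin n => (i, f i)))).card
        = n ^ n := by
      rw [Finset.card_image_of_injective _ ?_, Finset.card_univ, Fintype.card_fun,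
        Fintype.card_fin]
      intro f g h
      dsimp only at h
      funext i
      have : (i, f i) ∈ Finset.univ.image (fun k : Fin n => (k, g k)) := by
        rw [← h]; exact Finset.mem_image.2 ⟨i, Finset.mem_univ _, rfl⟩
      simp only [Finset.mem_image, Finset.mem_univ, true_and, Prod.mk.injEq] at this
      obtain ⟨k, hk, hfk⟩ := this
      subst hk; exact hfk.symm
    rw [hA, hB, max_eq_right]
    calc n = n ^ 1 := (pow_one n).symm
    _ ≤ n ^ n := Nat.pow_le_pow_right (le_of_lt hn) (le_of_lt hn)
end

section
/- Let H₀ = (V₀, E₀) be an (n−1)-uniform simple hypergraph (every two distinct edges share at most one vertex) with chromatic number 3. Let u₁, …, u_n be new vertices, B = {{u₁, …, u_n}}, and A = {e ∪ {u_i} : e ∈ E₀, 1 ≤ i ≤ n}. Then H = (V₀ ⊔ {u₁,…,u_n}, A ∪ B) is an n-uniform cross-intersecting family with χ(H) = 3 and the set of pairwise edge-intersection sizes Q(H) = {0, 1, 2, n−1}. -/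
section Helpers
variable {V₀ : Type*} [DecidableEq V₀] {n : ℕ}

lemma interAA (e₁ e₂ : Finset V₀) (i₁ i₂ : Fin n) :
    ((e₁.image Sum.inl ∪ {Sum.inr i₁}) ∩ (e₂.image Sum.inl ∪ {Sum.inr i₂})
      : Finset (V₀ ⊕ Fin n)) =
    (e₁ ∩ e₂).image Sum.inl ∪ (if i₁ = i₂ then {Sum.inr i₁} else ∅) := by
  ext x
  rcases x with v | j <;> by_cases h : i₁ = i₂ <;> simp [h] <;> aesop

lemma cardAA (e₁ e₂ : Finset V₀) (i₁ i₂ : Fin n) :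
    ((e₁.image Sum.inl ∪ {Sum.inr i₁}) ∩ (e₂.image Sum.inl ∪ {Sum.inr i₂})
      : Finset (V₀ ⊕ Fin n)).card =
    (e₁ ∩ e₂).card + (if i₁ = i₂ then 1 else 0) := by
  rw [interAA, Finset.card_union_of_disjoint, Finset.card_image_of_injective _ Sum.inl_injective]
  · split_ifs <;> simp
  · split_ifs <;> simp

lemma interAB (e : Finset V₀) (i : Fin n) :
    ((e.image Sum.inl ∪ {Sum.inr i}) ∩ Finset.univ.image Sum.inr
      : Finset (V₀ ⊕ Fin n)) = {Sum.inr i} := by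
  ext x; rcases x with v | j <;> simp

lemma eqAA {e₁ e₂ : Finset V₀} {i₁ i₂ : Fin n} :
    (e₁.image Sum.inl ∪ {Sum.inr i₁} : Finset (V₀ ⊕ Fin n)) =
      e₂.image Sum.inl ∪ {Sum.inr i₂} ↔ e₁ = e₂ ∧ i₁ = i₂ := by
  constructor
  · intro h
    have hi : i₁ = i₂ := by
      have := (Finset.ext_iff.mp h (Sum.inr i₁)).mp (by simp)
      simpa using this
    refine ⟨?_, hi⟩
    ext v
    have := Finset.ext_iff.mp h (Sum.inl v)
    simpa using this
  · rintro ⟨rfl, rfl⟩; rfl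

end Helpers

/-- from an `(n-1)`-uniform simple hypergraph `H₀` of chromatic number 3
(with a disjoint pair of edges and a pair of edges meeting in exactly one vertex),
adding `n` new vertices `u₁, …, uₙ`, letting `B = {{u₁, …, uₙ}}` and
`A = {e ∪ {uᵢ} : e ∈ E₀, i}`, gives an `n`-uniform cross-intersecting family `H` with
`χ(H) = 3` and pairwise intersection sizes `Q(H) = {0, 1, 2, n-1}`. -/
theorem stmt10 {V₀ : Type*} [DecidableEq V₀]
    (n : ℕ) (hn : 4 ≤ n)
    (E₀ : Finset (Finset V₀))
    (hunif₀ : ∀ e ∈ E₀, e.card = n - 1)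
    (hsimple : ∀ e₁ ∈ E₀, ∀ e₂ ∈ E₀, e₁ ≠ e₂ → (e₁ ∩ e₂).card ≤ 1)
    (hchrom3 : ∃ c : V₀ → Fin 3, ∀ e ∈ E₀, ∃ x ∈ e, ∃ y ∈ e, c x ≠ c y)
    (hchrom2 : ¬ ∃ c : V₀ → Fin 2, ∀ e ∈ E₀, ∃ x ∈ e, ∃ y ∈ e, c x ≠ c y)
    (hdisj : ∃ e₁ ∈ E₀, ∃ e₂ ∈ E₀, e₁ ∩ e₂ = ∅)
    (hone : ∃ e₁ ∈ E₀, ∃ e₂ ∈ E₀, e₁ ≠ e₂ ∧ (e₁ ∩ e₂).card = 1)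
    (A B : Finset (Finset (V₀ ⊕ Fin n)))
    (hAdef : A = (E₀ ×ˢ (Finset.univ : Finset (Fin n))).image
      (fun p => p.1.image Sum.inl ∪ {Sum.inr p.2}))
    (hBdef : B = {(Finset.univ : Finset (Fin n)).image Sum.inr}) :
    (∀ e ∈ A ∪ B, e.card = n) ∧
    (∀ a ∈ A, ∀ b ∈ B, (a ∩ b).Nonempty) ∧
    (∃ c : V₀ ⊕ Fin n → Fin 3, ∀ e ∈ A ∪ B, ∃ x ∈ e, ∃ y ∈ e, c x ≠ c y) ∧
    (¬ ∃ c : V₀ ⊕ Fin n → Fin 2, ∀ e ∈ A ∪ B, ∃ x ∈ e, ∃ y ∈ e, c x ≠ c y) ∧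
    {m : ℕ | ∃ e₁ ∈ A ∪ B, ∃ e₂ ∈ A ∪ B, e₁ ≠ e₂ ∧ (e₁ ∩ e₂).card = m}
      = ({0, 1, 2, n - 1} : Set ℕ) := by
  -- membership characterizations
  have hmemA : ∀ f : Finset (V₀ ⊕ Fin n), f ∈ A ↔
      ∃ e ∈ E₀, ∃ i : Fin n, f = e.image Sum.inl ∪ {Sum.inr i} := by
    intro f
    subst hAdef
    simp only [Finset.mem_image, Finset.mem_product, Finset.mem_univ, and_true, Prod.exists]
    constructor
    · rintro ⟨e, i, he, rfl⟩; exact ⟨e, he, i, rfl⟩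
    · rintro ⟨e, he, i, rfl⟩; exact ⟨e, i, he, rfl⟩
  have hmemB : ∀ f : Finset (V₀ ⊕ Fin n), f ∈ B ↔
      f = Finset.univ.image Sum.inr := by
    intro f; subst hBdef; simp
  have hnonempty : ∀ e ∈ E₀, e.Nonempty := by
    intro e he
    rw [← Finset.card_pos, hunif₀ e he]; omega
  -- two distinguished Fin n elements
  have h01 : (⟨0, by omega⟩ : Fin n) ≠ ⟨1, by omega⟩ := by
    simp [Fin.ext_iff]
  -- A-edges are never the B-edge
  have hAneB : ∀ e ∈ E₀, ∀ i : Fin n,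
      (e.image Sum.inl ∪ {Sum.inr i} : Finset (V₀ ⊕ Fin n)) ≠
      Finset.univ.image Sum.inr := by
    intro e he i h
    obtain ⟨v, hv⟩ := hnonempty e he
    have : (Sum.inl v : V₀ ⊕ Fin n) ∈ Finset.univ.image Sum.inr := by
      rw [← h]; simp [hv]
    simp at this
  refine ⟨?_, ?_, ?_, ?_, ?_⟩
  · -- uniformity
    intro f hf
    rcases Finset.mem_union.mp hf with hf | hf
    · obtain ⟨e, he, i, rfl⟩ := (hmemA f).mp hf
      rw [Finset.card_union_of_disjoint (by simp),
        Finset.card_image_of_injective _ Sum.inl_injective, hunif₀ e he]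
      simp; omega
    · rw [(hmemB f).mp hf, Finset.card_image_of_injective _ Sum.inr_injective]
      simp
  · -- cross-intersecting
    intro a ha b hb
    obtain ⟨e, he, i, rfl⟩ := (hmemA a).mp ha
    rw [(hmemB b).mp hb, interAB]
    simp
  · -- 3-colorable
    obtain ⟨c₀, hc₀⟩ := hchrom3
    refine ⟨Sum.elim c₀ (fun i => if i = ⟨0, by omega⟩ then 0 else 1), ?_⟩
    intro f hf
    rcases Finset.mem_union.mp hf with hf | hf
    · obtain ⟨e, he, i, rfl⟩ := (hmemA f).mp hf
      obtain ⟨x, hx, y, hy, hxy⟩ := hc₀ e he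
      exact ⟨Sum.inl x, by simp [hx], Sum.inl y, by simp [hy], hxy⟩
    · rw [(hmemB f).mp hf]
      refine ⟨Sum.inr ⟨0, by omega⟩, by simp, Sum.inr ⟨1, by omega⟩, by simp, ?_⟩
      simp [h01.symm, Fin.ext_iff]
  · -- not 2-colorable
    rintro ⟨c, hc⟩
    apply hchrom2
    by_contra hnot
    push_neg at hnot
    obtain ⟨e, he, hmono⟩ := hnot (fun v => c (Sum.inl v))
    obtain ⟨v₀, hv₀⟩ := hnonempty e he
    set k := c (Sum.inl v₀) with hk
    have hallk : ∀ v ∈ e, c (Sum.inl v) = k := fun v hv => hmono v hv v₀ hv₀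
    -- every new vertex gets color ≠ k
    have hinr : ∀ i : Fin n, c (Sum.inr i) ≠ k := by
      intro i hik
      have hfA : (e.image Sum.inl ∪ {Sum.inr i} : Finset (V₀ ⊕ Fin n)) ∈ A ∪ B :=
        Finset.mem_union_left _ ((hmemA _).mpr ⟨e, he, i, rfl⟩)
      obtain ⟨x, hx, y, hy, hxy⟩ := hc _ hfA
      have hxk : c x = k := by
        rcases Finset.mem_union.mp hx with h | h
        · obtain ⟨v, hv, rfl⟩ := Finset.mem_image.mp h; exact hallk v hv
        · simp at h; subst h; exact hik
      have hyk : c y = k := by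
        rcases Finset.mem_union.mp hy with h | h
        · obtain ⟨v, hv, rfl⟩ := Finset.mem_image.mp h; exact hallk v hv
        · simp at h; subst h; exact hik
      exact hxy (hxk.trans hyk.symm)
    -- B edge is monochromatic: contradiction
    have hfB : (Finset.univ.image Sum.inr : Finset (V₀ ⊕ Fin n)) ∈ A ∪ B :=
      Finset.mem_union_right _ ((hmemB _).mpr rfl)
    obtain ⟨x, hx, y, hy, hxy⟩ := hc _ hfB
    obtain ⟨i, -, rfl⟩ := Finset.mem_image.mp hx
    obtain ⟨j, -, rfl⟩ := Finset.mem_image.mp hy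
    have hi := hinr i
    have hj := hinr j
    apply hxy
    have h2 : ∀ a b : Fin 2, a ≠ b → a = 1 - b := by decide
    rw [h2 _ _ hi, h2 _ _ hj]
  · -- Q(H) = {0,1,2,n-1}
    ext m
    simp only [Set.mem_setOf_eq, Set.mem_insert_iff, Set.mem_singleton_iff]
    constructor
    · rintro ⟨f₁, hf₁, f₂, hf₂, hne, rfl⟩
      rcases Finset.mem_union.mp hf₁ with h1 | h1 <;>
        rcases Finset.mem_union.mp hf₂ with h2 | h2
      · obtain ⟨e₁, he₁, i₁, rfl⟩ := (hmemA _).mp h1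
        obtain ⟨e₂, he₂, i₂, rfl⟩ := (hmemA _).mp h2
        rw [cardAA]
        by_cases hee : e₁ = e₂
        · subst hee
          have hii : i₁ ≠ i₂ := fun h => hne (by rw [h])
          simp [hii, hunif₀ e₁ he₁]
        · have := hsimple e₁ he₁ e₂ he₂ hee
          split_ifs <;> omega
      · obtain ⟨e, he, i, rfl⟩ := (hmemA _).mp h1
        rw [(hmemB _).mp h2, interAB]
        simp
      · obtain ⟨e, he, i, rfl⟩ := (hmemA _).mp h2
        rw [(hmemB _).mp h1, Finset.inter_comm, interAB]
        simp
      · exact absurd ((hmemB _).mp h1 ▸ (hmemB _).mp h2 ▸ rfl) hne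
    · obtain ⟨d₁, hd₁, d₂, hd₂, hd⟩ := hdisj
      obtain ⟨g₁, hg₁, g₂, hg₂, hgne, hg⟩ := hone
      rintro (rfl | rfl | rfl | rfl)
      · -- 0 : disjoint pair, distinct indices
        refine ⟨d₁.image Sum.inl ∪ {Sum.inr ⟨0, by omega⟩},
          Finset.mem_union_left _ ((hmemA _).mpr ⟨d₁, hd₁, _, rfl⟩),
          d₂.image Sum.inl ∪ {Sum.inr ⟨1, by omega⟩},
          Finset.mem_union_left _ ((hmemA _).mpr ⟨d₂, hd₂, _, rfl⟩), ?_, ?_⟩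
        · intro h; exact h01 (eqAA.mp h).2
        · rw [cardAA, hd]; simp [h01]
      · -- 1 : A-edge vs B-edge
        refine ⟨d₁.image Sum.inl ∪ {Sum.inr ⟨0, by omega⟩},
          Finset.mem_union_left _ ((hmemA _).mpr ⟨d₁, hd₁, _, rfl⟩),
          Finset.univ.image Sum.inr,
          Finset.mem_union_right _ ((hmemB _).mpr rfl),
          hAneB d₁ hd₁ _, ?_⟩
        rw [interAB]; simp
      · -- 2 : one-point pair, same index
        refine ⟨g₁.image Sum.inl ∪ {Sum.inr ⟨0, by omega⟩},
          Finset.mem_union_left _ ((hmemA _).mpr ⟨g₁, hg₁, _, rfl⟩),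
          g₂.image Sum.inl ∪ {Sum.inr ⟨0, by omega⟩},
          Finset.mem_union_left _ ((hmemA _).mpr ⟨g₂, hg₂, _, rfl⟩),
          fun h => hgne (eqAA.mp h).1, ?_⟩
        rw [cardAA, hg]; simp
      · -- n-1 : same e, distinct indices
        refine ⟨d₁.image Sum.inl ∪ {Sum.inr ⟨0, by omega⟩},
          Finset.mem_union_left _ ((hmemA _).mpr ⟨d₁, hd₁, _, rfl⟩),
          d₁.image Sum.inl ∪ {Sum.inr ⟨1, by omega⟩},
          Finset.mem_union_left _ ((hmemA _).mpr ⟨d₁, hd₁, _, rfl⟩),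
          fun h => h01 (eqAA.mp h).2, ?_⟩
        rw [cardAA]
        simp [h01, hunif₀ d₁ hd₁]
end

section
/- In the proof-step of the 2-colorability obstruction: if H = (V, A ∪ B) is a Sperner cross-intersecting family with no edge of size 2, and a ∈ A, b ∈ B is a pair minimizing |a ∪ b|, then coloring one vertex v_a ∈ a \ b and one vertex v_b ∈ b \ a with color 1, the rest of a ∪ b with color 2, and all other vertices with color 3 yields a proper 3-coloring of H. -/
/-- for a Sperner cross-intersecting family with no edge of size 2
(all edges of size ≥ 3), taking a pair `(a, b) ∈ A × B` minimizing `|a ∪ b|` and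
vertices `va ∈ a \ b`, `vb ∈ b \ a`, the coloring giving `va, vb` color 1, the rest of
`a ∪ b` color 2 and everything else color 3 is a proper 3-coloring. -/
theorem stmt11 {V : Type*} [DecidableEq V]
    (A B : Finset (Finset V))
    (hA : A.Nonempty) (hB : B.Nonempty)
    (hcross : ∀ a ∈ A, ∀ b ∈ B, (a ∩ b).Nonempty)
    (hsize : ∀ e ∈ A ∪ B, 3 ≤ e.card)
    (hsperner : ∀ e₁ ∈ A ∪ B, ∀ e₂ ∈ A ∪ B, ¬ e₁ ⊂ e₂)
    (a b : Finset V) (ha : a ∈ A) (hb : b ∈ B)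
    (hmin : ∀ a' ∈ A, ∀ b' ∈ B, (a ∪ b).card ≤ (a' ∪ b').card)
    (va vb : V) (hva : va ∈ a \ b) (hvb : vb ∈ b \ a) :
    ∀ e ∈ A ∪ B, ∃ x ∈ e, ∃ y ∈ e,
      (fun v : V => if v = va ∨ v = vb then (0 : Fin 3)
        else if v ∈ a ∪ b then 1 else 2) x ≠
      (fun v : V => if v = va ∨ v = vb then (0 : Fin 3)
        else if v ∈ a ∪ b then 1 else 2) y := by
  rw [Finset.mem_sdiff] at hva hvb
  obtain ⟨hvaa, hvab⟩ := hva
  obtain ⟨hvbb, hvba⟩ := hvb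
  intro e he
  by_cases hcase : va ∈ e ∨ vb ∈ e
  · -- e contains a 0-colored vertex; by size ≥ 3 it also has a non-{va,vb} vertex
    have h3 := hsize e he
    have hne : (e \ {va, vb}).Nonempty := by
      rw [← Finset.card_pos]
      have h1 := Finset.card_sdiff_add_card e ({va, vb} : Finset V)
      have h2 : ({va, vb} : Finset V).card ≤ 2 :=
        (Finset.card_insert_le _ _).trans (by simp)
      have h4 : e.card ≤ (e ∪ {va, vb}).card :=
        Finset.card_le_card Finset.subset_union_left
      omega
    obtain ⟨x, hx⟩ := hne
    rw [Finset.mem_sdiff, Finset.mem_insert, Finset.mem_singleton] at hx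
    obtain ⟨hxe, hx2⟩ := hx
    push_neg at hx2
    obtain hv | hv := hcase
    · exact ⟨va, hv, x, hxe, by simp [hx2.1, hx2.2]; split <;> simp⟩
    · exact ⟨vb, hv, x, hxe, by simp [hx2.1, hx2.2]; split <;> simp⟩
  · push_neg at hcase
    obtain ⟨hvae, hvbe⟩ := hcase
    by_cases hsub : e ⊆ a ∪ b
    · exfalso
      rw [Finset.mem_union] at he
      obtain heA | heB := he
      · have hlt : (e ∪ b).card < (a ∪ b).card := by
          apply Finset.card_lt_card
          refine ⟨Finset.union_subset hsub Finset.subset_union_right, fun h => ?_⟩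
          have := h (Finset.mem_union_left _ hvaa)
          rw [Finset.mem_union] at this
          exact this.elim (fun h' => hvae h') (fun h' => hvab h')
        exact absurd (hmin e heA b hb) (by omega)
      · have hlt : (a ∪ e).card < (a ∪ b).card := by
          apply Finset.card_lt_card
          refine ⟨Finset.union_subset Finset.subset_union_left hsub, fun h => ?_⟩
          have := h (Finset.mem_union_right _ hvbb)
          rw [Finset.mem_union] at this
          exact this.elim (fun h' => hvba h') (fun h' => hvbe h')
        exact absurd (hmin a ha e heB) (by omega)
    · -- e has a vertex outside a ∪ b (color 2) and one inside (color 1)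
      obtain ⟨y, hye, hy⟩ := Finset.not_subset.mp hsub
      have hx : ∃ x ∈ e, x ∈ a ∪ b := by
        rw [Finset.mem_union] at he
        obtain heA | heB := he
        · obtain ⟨x, hx⟩ := hcross e heA b hb
          rw [Finset.mem_inter] at hx
          exact ⟨x, hx.1, Finset.mem_union_right _ hx.2⟩
        · obtain ⟨x, hx⟩ := hcross a ha e heB
          rw [Finset.mem_inter] at hx
          exact ⟨x, hx.2, Finset.mem_union_left _ hx.1⟩
      obtain ⟨x, hxe, hxab⟩ := hx
      have hxva : x ≠ va := fun h => hvae (h ▸ hxe)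
      have hxvb : x ≠ vb := fun h => hvbe (h ▸ hxe)
      have hyva : y ≠ va := fun h => hvae (h ▸ hye)
      have hyvb : y ≠ vb := fun h => hvbe (h ▸ hye)
      exact ⟨x, hxe, y, hye, by simp [hxva, hxvb, hyva, hyvb, hxab, hy]⟩
end

section
/- The complete bipartite-style exceptional family: for m, l ≥ 2, let V = {v₁,…,v_m, u₁,…,u_l}, B = {{v₁,…,v_m}, {u₁,…,u_l}}, and A = {{v_i, u_j} : all i, j}. Then H = (V, A ∪ B) is a Sperner cross-intersecting family with chromatic number exactly 4. -/
/-- the exceptional family: for `m, l ≥ 2`, with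
`B = {{v₁,…,v_m}, {u₁,…,u_l}}` and `A` all pairs `{vᵢ, uⱼ}`, the family is a Sperner
cross-intersecting family of chromatic number exactly 4. -/
theorem stmt14 (m l : ℕ) (hm : 2 ≤ m) (hl : 2 ≤ l)
    (A B : Finset (Finset (Fin m ⊕ Fin l)))
    (hAdef : A = (Finset.univ : Finset (Fin m × Fin l)).image
      (fun p => ({Sum.inl p.1, Sum.inr p.2} : Finset (Fin m ⊕ Fin l))))
    (hBdef : B = {(Finset.univ : Finset (Fin m)).image Sum.inl,
                  (Finset.univ : Finset (Fin l)).image Sum.inr}) :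
    (∀ a ∈ A, ∀ b ∈ B, (a ∩ b).Nonempty) ∧
    (∀ e₁ ∈ A ∪ B, ∀ e₂ ∈ A ∪ B, ¬ e₁ ⊂ e₂) ∧
    (∃ c : Fin m ⊕ Fin l → Fin 4, ∀ e ∈ A ∪ B, ∃ x ∈ e, ∃ y ∈ e, c x ≠ c y) ∧
    ¬ (∃ c : Fin m ⊕ Fin l → Fin 3, ∀ e ∈ A ∪ B, ∃ x ∈ e, ∃ y ∈ e, c x ≠ c y) := by
  subst hAdef hBdef
  have i0 : Fin m := ⟨0, by omega⟩
  have i1 : Fin m := ⟨1, by omega⟩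
  have j0 : Fin l := ⟨0, by omega⟩
  have j1 : Fin l := ⟨1, by omega⟩
  have cardA : ∀ (i : Fin m) (j : Fin l),
      ({Sum.inl i, Sum.inr j} : Finset (Fin m ⊕ Fin l)).card = 2 := by
    intro i j
    rw [Finset.card_insert_of_notMem (by simp), Finset.card_singleton]
  refine ⟨?_, ?_, ?_, ?_⟩
  · intro a ha b hb
    simp only [Finset.mem_image, Finset.mem_univ, true_and] at ha
    obtain ⟨⟨i, j⟩, rfl⟩ := ha
    simp only [Finset.mem_insert, Finset.mem_singleton] at hb
    rcases hb with rfl | rfl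
    · exact ⟨Sum.inl i, Finset.mem_inter.2 ⟨by simp, by simp⟩⟩
    · exact ⟨Sum.inr j, Finset.mem_inter.2 ⟨by simp, by simp⟩⟩
  · intro e₁ h1 e₂ h2 hss
    simp only [Finset.mem_union, Finset.mem_image, Finset.mem_insert,
      Finset.mem_singleton, Finset.mem_univ, true_and] at h1 h2
    -- compute cards
    have hc1 : 2 ≤ e₁.card := by
      rcases h1 with ⟨⟨i, j⟩, rfl⟩ | (rfl | rfl)
      · rw [cardA]
      · rw [Finset.card_image_of_injective _ Sum.inl_injective, Finset.card_univ,
          Fintype.card_fin]; exact hm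
      · rw [Finset.card_image_of_injective _ Sum.inr_injective, Finset.card_univ,
          Fintype.card_fin]; exact hl
    rcases h2 with ⟨⟨i, j⟩, rfl⟩ | (rfl | rfl)
    · have := Finset.card_lt_card hss
      rw [cardA] at this; omega
    · -- e₂ = image inl univ; e₁ must contain only inl's, but A-edges contain inr,
      -- and the other B-edge contains inr too; and e₁ ≠ e₂
      rcases h1 with ⟨⟨i, j⟩, rfl⟩ | (rfl | rfl)
      · have := hss.1 (Finset.mem_insert_of_mem (Finset.mem_singleton_self _))
        simp at this
      · exact (ssubset_irrefl _) hss
      · have := hss.1 (Finset.mem_image_of_mem Sum.inr (Finset.mem_univ j0))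
        simp at this
    · rcases h1 with ⟨⟨i, j⟩, rfl⟩ | (rfl | rfl)
      · have := hss.1 (Finset.mem_insert_self _ _)
        simp at this
      · have := hss.1 (Finset.mem_image_of_mem Sum.inl (Finset.mem_univ i0))
        simp at this
      · exact (ssubset_irrefl _) hss
  · refine ⟨fun x => match x with
      | Sum.inl i => if i.val = 0 then 0 else 1
      | Sum.inr j => if j.val = 0 then 2 else 3, ?_⟩
    intro e he
    simp only [Finset.mem_union, Finset.mem_image, Finset.mem_insert,
      Finset.mem_singleton, Finset.mem_univ, true_and] at he
    rcases he with ⟨⟨i, j⟩, rfl⟩ | (rfl | rfl)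
    · refine ⟨Sum.inl i, by simp, Sum.inr j, by simp, ?_⟩
      simp only
      split <;> split <;> decide
    · refine ⟨Sum.inl ⟨0, by omega⟩, Finset.mem_image_of_mem _ (Finset.mem_univ _),
        Sum.inl ⟨1, by omega⟩, Finset.mem_image_of_mem _ (Finset.mem_univ _), ?_⟩
      simp
    · refine ⟨Sum.inr ⟨0, by omega⟩, Finset.mem_image_of_mem _ (Finset.mem_univ _),
        Sum.inr ⟨1, by omega⟩, Finset.mem_image_of_mem _ (Finset.mem_univ _), ?_⟩
      simp
  · rintro ⟨c, hc⟩
    have key : ∀ (i : Fin m) (j : Fin l), c (Sum.inl i) ≠ c (Sum.inr j) := by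
      intro i j
      obtain ⟨x, hx, y, hy, hxy⟩ := hc _ (Finset.mem_union_left _
        (Finset.mem_image_of_mem _ (Finset.mem_univ (i, j))))
      simp only [Finset.mem_insert, Finset.mem_singleton] at hx hy
      rcases hx with rfl | rfl <;> rcases hy with rfl | rfl
      · exact absurd rfl hxy
      · exact hxy
      · exact fun h => hxy h.symm
      · exact absurd rfl hxy
    obtain ⟨x, hx, y, hy, hxy⟩ := hc _ (Finset.mem_union_right _
      (Finset.mem_insert_self _ _))
    obtain ⟨x', hx', y', hy', hxy'⟩ := hc _ (Finset.mem_union_right _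
      (Finset.mem_insert_of_mem (Finset.mem_singleton_self _)))
    simp only [Finset.mem_image, Finset.mem_univ, true_and] at hx hy hx' hy'
    obtain ⟨i, rfl⟩ := hx
    obtain ⟨i', rfl⟩ := hy
    obtain ⟨j, rfl⟩ := hx'
    obtain ⟨j', rfl⟩ := hy'
    have h1 := key i j
    have h2 := key i j'
    have h3 := key i' j
    have h4 := key i' j'
    have v1 : (c (Sum.inl i)).val < 3 := (c (Sum.inl i)).isLt
    have v2 : (c (Sum.inl i')).val < 3 := (c (Sum.inl i')).isLt
    have v3 : (c (Sum.inr j)).val < 3 := (c (Sum.inr j)).isLt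
    have v4 : (c (Sum.inr j')).val < 3 := (c (Sum.inr j')).isLt
    have n1 : (c (Sum.inl i)).val ≠ (c (Sum.inl i')).val := fun h => hxy (Fin.ext h)
    have n2 : (c (Sum.inr j)).val ≠ (c (Sum.inr j')).val := fun h => hxy' (Fin.ext h)
    have n3 : (c (Sum.inl i)).val ≠ (c (Sum.inr j)).val := fun h => h1 (Fin.ext h)
    have n4 : (c (Sum.inl i)).val ≠ (c (Sum.inr j')).val := fun h => h2 (Fin.ext h)
    have n5 : (c (Sum.inl i')).val ≠ (c (Sum.inr j)).val := fun h => h3 (Fin.ext h)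
    have n6 : (c (Sum.inl i')).val ≠ (c (Sum.inr j')).val := fun h => h4 (Fin.ext h)
    omega
end
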